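/- arXiv:2208.11256 — 5 statements merged into one kernel-verified Lean document; each statement's English description precedes it below -/
import Mathlib

section
/- Let (𝔫, ⟨·,·⟩) be a metric Lie algebra with 𝔫 nilpotent, satisfying the GO condition, and suppose the restriction of ⟨·,·⟩ to the derived algebra [𝔫,𝔫] is nondegenerate and Lorentz. Then [𝔫,𝔫] is abelian: [[𝔫,𝔫],[𝔫,𝔫]] = 0. -/
/-- `D` is a skew-symmetric derivation of the metric Lie algebra `(𝔫, B)`. -/
def IsSkewDeriv {n : Type*} [LieRing n] [LieAlgebra ℝ n]
    (B : LinearMap.BilinForm ℝ n) (D : n →ₗ[ℝ] n) : Prop :=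
  (∀ X Y : n, D ⁅X, Y⁆ = ⁅D X, Y⁆ + ⁅X, D Y⁆) ∧
  (∀ X Y : n, B (D X) Y + B X (D Y) = 0)

/-- The GO condition for a metric Lie algebra `(𝔫, B)`: for every `T` there are a
skew-symmetric derivation `A` and `k ∈ ℝ` with `⟨[T,T'] + A(T'), T⟩ = k⟨T,T'⟩` for all `T'`. -/
def IsGO {n : Type*} [LieRing n] [LieAlgebra ℝ n] (B : LinearMap.BilinForm ℝ n) : Prop :=
  ∀ T : n, ∃ (A : n →ₗ[ℝ] n) (k : ℝ), IsSkewDeriv B A ∧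
    ∀ T' : n, B (⁅T, T'⁆ + A T') T = k * B T T'

/-- A symmetric bilinear form is Lorentz: there is an orthogonal basis in which exactly one
basis vector has negative norm-square and all others have positive norm-square. -/
def IsLorentz {V : Type*} [AddCommGroup V] [Module ℝ V] (B : LinearMap.BilinForm ℝ V) : Prop :=
  ∃ (m : ℕ) (b : Module.Basis (Fin (m + 1)) ℝ V) (i₀ : Fin (m + 1)),
    (∀ i j, i ≠ j → B (b i) (b j) = 0) ∧ B (b i₀) (b i₀) < 0 ∧
    ∀ i, i ≠ i₀ → 0 < B (b i) (b i)

/-- The derived algebra `[𝔫,𝔫]`, as a submodule of `𝔫`. -/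
def derived (n : Type*) [LieRing n] [LieAlgebra ℝ n] : Submodule ℝ n :=
  Submodule.span ℝ {z : n | ∃ X Y : n, ⁅X, Y⁆ = z}

section Aux

variable {n : Type*} [LieRing n] [LieAlgebra ℝ n]

lemma bracket_mem_derived (x y : n) : ⁅x, y⁆ ∈ derived n :=
  Submodule.subset_span ⟨x, y, rfl⟩

variable (B : LinearMap.BilinForm ℝ n)

lemma skewDeriv_mem_derived {A : n →ₗ[ℝ] n} (hA : IsSkewDeriv B A)
    {z : n} (hz : z ∈ derived n) : A z ∈ derived n := by
  induction hz using Submodule.span_induction with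
  | mem x hx =>
    obtain ⟨X, Y, rfl⟩ := hx
    rw [hA.1]
    exact Submodule.add_mem _ (bracket_mem_derived _ _) (bracket_mem_derived _ _)
  | zero => simp
  | add x y _ _ hx hy => rw [map_add]; exact Submodule.add_mem _ hx hy
  | smul a x _ hx => rw [map_smul]; exact Submodule.smul_mem _ _ hx

lemma skew_apply_self (hsymm : ∀ X Y : n, B X Y = B Y X)
    {A : n →ₗ[ℝ] n} (hA : IsSkewDeriv B A) (x : n) : B (A x) x = 0 := by
  have h := hA.2 x x
  have h2 := hsymm x (A x)
  linarith

end Aux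
section Key

variable {n : Type*} [LieRing n] [LieAlgebra ℝ n]
variable (B : LinearMap.BilinForm ℝ n)

/-- GO at `t•x+z` with good `t` gives `B ⁅x,z⁆ z = 0`. -/
lemma key1 (hsymm : ∀ X Y : n, B X Y = B Y X) (hGO : IsGO B)
    {x z : n} (hx : ∀ u ∈ derived n, B x u = 0) (hz : z ∈ derived n) (t : ℝ) (ht : t ≠ 0)
    (hT : t ^ 2 * B x x + B z z ≠ 0) : B ⁅x, z⁆ z = 0 := by
  obtain ⟨A, k, hA, hid⟩ := hGO (t • x + z)
  have hAz : A z ∈ derived n := skewDeriv_mem_derived B hA hz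
  have hxz : B x z = 0 := hx z hz
  have hbx : B ⁅x, z⁆ x = 0 := by rw [hsymm]; exact hx _ (bracket_mem_derived x z)
  have hAzx : B (A z) x = 0 := by rw [hsymm]; exact hx _ hAz
  have hAzz : B (A z) z = 0 := skew_apply_self B hsymm hA z
  have e1 := hid z
  rw [add_lie, smul_lie, lie_self, add_zero] at e1
  simp only [map_add, map_smul, LinearMap.add_apply, LinearMap.smul_apply,
    smul_eq_mul] at e1
  rw [hbx, hAzx, hAzz, hxz] at e1
  -- e1 : t * (t * 0) + (t * B ⁅x,z⁆ z + ...) = k * (t*0 + B z z) roughly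
  have e2 := hid (t • x + z)
  rw [lie_self, zero_add] at e2
  have hAT : B (A (t • x + z)) (t • x + z) = 0 := skew_apply_self B hsymm hA _
  rw [hAT] at e2
  simp only [map_add, map_smul, LinearMap.add_apply, LinearMap.smul_apply,
    smul_eq_mul] at e2
  rw [hxz, hsymm z x, hxz] at e2
  -- e2 : 0 = k * (t*(t*Bxx + 0) + (t*0 + Bzz))
  have hk : k = 0 := by
    rcases mul_eq_zero.1 e2.symm with h | h
    · exact h
    · exfalso; apply hT; rw [← h]; ring
  rw [hk] at e1
  have : t * B ⁅x, z⁆ z = 0 := by linarith [e1]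
  rcases mul_eq_zero.1 this with h | h
  · exact absurd h ht
  · exact h

end Key
section Key2

variable {n : Type*} [LieRing n] [LieAlgebra ℝ n]
variable (B : LinearMap.BilinForm ℝ n)

lemma key2 (hsymm : ∀ X Y : n, B X Y = B Y X) (hGO : IsGO B)
    {x z : n} (hx : ∀ u ∈ derived n, B x u = 0) (hz : z ∈ derived n)
    (h : B x x ≠ 0 ∨ B z z ≠ 0) : B ⁅x, z⁆ z = 0 := by
  by_cases hxx : B x x ≠ 0
  · by_cases h1 : 1 ^ 2 * B x x + B z z ≠ 0
    · exact key1 B hsymm hGO hx hz 1 one_ne_zero h1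
    · refine key1 B hsymm hGO hx hz 2 two_ne_zero ?_
      push_neg at h1
      intro h2
      apply hxx
      nlinarith [h1, h2]
  · push_neg at hxx
    have hzz : B z z ≠ 0 := h.resolve_left (by simpa using hxx)
    refine key1 B hsymm hGO hx hz 1 one_ne_zero ?_
    rw [hxx]; simpa using hzz

end Key2
section Compl

variable {n : Type*} [LieRing n] [LieAlgebra ℝ n] [FiniteDimensional ℝ n]
variable (B : LinearMap.BilinForm ℝ n)

lemma derived_restrict_nondeg
    (hnondeg' : ∀ X ∈ derived n, (∀ Y ∈ derived n, B X Y = 0) → X = 0) :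
    (B.restrict (derived n)).Nondegenerate := by
  refine LinearMap.BilinForm.Nondegenerate.ofSeparatingLeft ?_
  intro x h
  have : (x : n) = 0 := by
    apply hnondeg' x x.2
    intro Y hY
    simpa using h ⟨Y, hY⟩
  exact Subtype.ext this

lemma exists_decomp (hsymm : ∀ X Y : n, B X Y = B Y X)
    (hnondeg' : ∀ X ∈ derived n, (∀ Y ∈ derived n, B X Y = 0) → X = 0) (a : n) :
    ∃ z ∈ derived n, ∃ x : n, (∀ u ∈ derived n, B x u = 0) ∧ a = z + x := by
  have hrefl : B.IsRefl := fun X Y h => by rw [hsymm]; exact h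
  have hcompl := LinearMap.BilinForm.isCompl_orthogonal_of_restrict_nondegenerate
    (B := B) (W := derived n) hrefl (derived_restrict_nondeg B hnondeg')
  have ha : a ∈ derived n ⊔ B.orthogonal (derived n) := by
    rw [hcompl.sup_eq_top]; trivial
  obtain ⟨z, hz, x, hx, rfl⟩ := Submodule.mem_sup.1 ha
  refine ⟨z, hz, x, fun u hu => ?_, rfl⟩
  rw [hsymm]
  exact (LinearMap.BilinForm.mem_orthogonal_iff.1 hx) u hu

lemma vcomp_nondeg (hsymm : ∀ X Y : n, B X Y = B Y X)
    (hnondeg : ∀ X : n, (∀ Y : n, B X Y = 0) → X = 0)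
    (hnondeg' : ∀ X ∈ derived n, (∀ Y ∈ derived n, B X Y = 0) → X = 0)
    (x : n) (hxV : ∀ u ∈ derived n, B x u = 0)
    (hxO : ∀ y : n, (∀ u ∈ derived n, B y u = 0) → B x y = 0) : x = 0 := by
  apply hnondeg
  intro Y
  obtain ⟨z, hz, y, hy, rfl⟩ := exists_decomp B hsymm hnondeg' Y
  rw [map_add, hxV z hz, hxO y hy, add_zero]

end Compl
section Key3

variable {n : Type*} [LieRing n] [LieAlgebra ℝ n] [FiniteDimensional ℝ n]
variable (B : LinearMap.BilinForm ℝ n)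

omit [FiniteDimensional ℝ n] in
lemma brk_lin (a b z : n) (s t : ℝ) :
    B ⁅s • a + t • b, z⁆ z = s * B ⁅a, z⁆ z + t * B ⁅b, z⁆ z := by
  rw [add_lie, smul_lie, smul_lie]
  simp [map_add, map_smul, smul_eq_mul]

lemma key3 (hsymm : ∀ X Y : n, B X Y = B Y X)
    (hnondeg : ∀ X : n, (∀ Y : n, B X Y = 0) → X = 0)
    (hnondeg' : ∀ X ∈ derived n, (∀ Y ∈ derived n, B X Y = 0) → X = 0)
    (hGO : IsGO B)
    {x z : n} (hx : ∀ u ∈ derived n, B x u = 0) (hz : z ∈ derived n) :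
    B ⁅x, z⁆ z = 0 := by
  by_cases hxx : B x x ≠ 0
  · exact key2 B hsymm hGO hx hz (Or.inl hxx)
  by_cases hzz : B z z ≠ 0
  · exact key2 B hsymm hGO hx hz (Or.inr hzz)
  push_neg at hxx hzz
  by_cases hx0 : x = 0
  · subst hx0; simp
  have hy : ∃ y : n, (∀ u ∈ derived n, B y u = 0) ∧ B x y ≠ 0 := by
    by_contra h
    push_neg at h
    exact hx0 (vcomp_nondeg B hsymm hnondeg hnondeg' x hx
      (fun y hyp => by
        by_cases hh : B x y = 0
        · exact hh
        · exact absurd hh (not_not.2 (h y hyp))))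
  obtain ⟨y, hyP, hxy⟩ := hy
  have m1 : ∀ u ∈ derived n, B (x + y) u = 0 := fun u hu => by
    simp only [map_add, LinearMap.add_apply]; rw [hx u hu, hyP u hu, add_zero]
  have m2 : ∀ u ∈ derived n, B (x - y) u = 0 := fun u hu => by
    simp only [map_sub, LinearMap.sub_apply]; rw [hx u hu, hyP u hu, sub_zero]
  have hplus : B (x + y) (x + y) = 2 * B x y + B y y := by
    simp only [map_add, LinearMap.add_apply]
    rw [hxx, hsymm y x]; ring
  have hminus : B (x - y) (x - y) = -(2 * B x y) + B y y := by
    simp only [map_sub, LinearMap.sub_apply]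
    rw [hxx, hsymm y x]; ring
  by_cases hyy : B y y = 0
  · have h1 : B (x + y) (x + y) ≠ 0 := by rw [hplus, hyy]; intro h; apply hxy; linarith
    have h2 : B (x - y) (x - y) ≠ 0 := by rw [hminus, hyy]; intro h; apply hxy; linarith
    have k1 := key2 B hsymm hGO m1 hz (Or.inl h1)
    have k2 := key2 B hsymm hGO m2 hz (Or.inl h2)
    have hxdec : x = (1/2 : ℝ) • (x + y) + (1/2 : ℝ) • (x - y) := by module
    rw [hxdec, brk_lin, k1, k2]; ring
  · have hcase : B (x + y) (x + y) ≠ 0 ∨ B (x - y) (x - y) ≠ 0 := by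
      by_contra h
      push_neg at h
      obtain ⟨e1, e2⟩ := h
      rw [hplus] at e1
      rw [hminus] at e2
      apply hyy
      linarith
    rcases hcase with h1 | h1
    · have k1 := key2 B hsymm hGO m1 hz (Or.inl h1)
      have k2 := key2 B hsymm hGO hyP hz (Or.inl hyy)
      have hxdec : x = (1 : ℝ) • (x + y) + (-1 : ℝ) • y := by module
      rw [hxdec, brk_lin, k1, k2]; ring
    · have k1 := key2 B hsymm hGO m2 hz (Or.inl h1)
      have k2 := key2 B hsymm hGO hyP hz (Or.inl hyy)
      have hxdec : x = (1 : ℝ) • (x - y) + (1 : ℝ) • y := by module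
      rw [hxdec, brk_lin, k1, k2]; ring

end Key3
section Invariance

variable {n : Type*} [LieRing n] [LieAlgebra ℝ n] [FiniteDimensional ℝ n]

/-- Elements `a` such that `ad a` is `B`-skew on the derived algebra. -/
def skewSub (B : LinearMap.BilinForm ℝ n) : Submodule ℝ n where
  carrier := {a | ∀ u ∈ derived n, ∀ v ∈ derived n, B ⁅a, u⁆ v = - B u ⁅a, v⁆}
  add_mem' := by
    intro a b ha hb u hu v hv
    rw [add_lie, add_lie, map_add, map_add, LinearMap.add_apply, ha u hu v hv, hb u hu v hv]
    ring
  zero_mem' := by intro u hu v hv; simp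
  smul_mem' := by
    intro c a ha u hu v hv
    rw [smul_lie, smul_lie, map_smul, map_smul, LinearMap.smul_apply, ha u hu v hv,
      smul_eq_mul, smul_eq_mul]
    ring

variable (B : LinearMap.BilinForm ℝ n)

lemma key4 (hsymm : ∀ X Y : n, B X Y = B Y X)
    (hnondeg : ∀ X : n, (∀ Y : n, B X Y = 0) → X = 0)
    (hnondeg' : ∀ X ∈ derived n, (∀ Y ∈ derived n, B X Y = 0) → X = 0)
    (hGO : IsGO B)
    {x : n} (hx : ∀ u ∈ derived n, B x u = 0) : x ∈ skewSub B := by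
  intro u hu v hv
  have h1 := key3 B hsymm hnondeg hnondeg' hGO hx hu
  have h2 := key3 B hsymm hnondeg hnondeg' hGO hx hv
  have h3 := key3 B hsymm hnondeg hnondeg' hGO hx (Submodule.add_mem _ hu hv)
  rw [lie_add, map_add, map_add, LinearMap.add_apply, LinearMap.add_apply] at h3
  rw [h1, h2] at h3
  have : B ⁅x, u⁆ v + B ⁅x, v⁆ u = 0 := by linarith
  rw [hsymm u ⁅x, v⁆]
  linarith

omit [FiniteDimensional ℝ n] in
lemma key5 (hsymm : ∀ X Y : n, B X Y = B Y X)
    {a b : n} (ha : a ∈ skewSub B) (hb : b ∈ skewSub B) : ⁅a, b⁆ ∈ skewSub B := by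
  intro u hu v hv
  have hbu : ⁅b, u⁆ ∈ derived n := bracket_mem_derived b u
  have hau : ⁅a, u⁆ ∈ derived n := bracket_mem_derived a u
  have hbv : ⁅b, v⁆ ∈ derived n := bracket_mem_derived b v
  have hav : ⁅a, v⁆ ∈ derived n := bracket_mem_derived a v
  have e1 : B ⁅a, ⁅b, u⁆⁆ v = B u ⁅b, ⁅a, v⁆⁆ := by
    rw [ha ⁅b, u⁆ hbu v hv, hb u hu ⁅a, v⁆ hav]; ring
  have e2 : B ⁅b, ⁅a, u⁆⁆ v = B u ⁅a, ⁅b, v⁆⁆ := by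
    rw [hb ⁅a, u⁆ hau v hv, ha u hu ⁅b, v⁆ hbv]; ring
  rw [lie_lie, lie_lie]
  rw [map_sub, LinearMap.sub_apply, e1, e2, map_sub]
  ring

lemma all_skew [LieRing.IsNilpotent n]
    (hsymm : ∀ X Y : n, B X Y = B Y X)
    (hnondeg : ∀ X : n, (∀ Y : n, B X Y = 0) → X = 0)
    (hnondeg' : ∀ X ∈ derived n, (∀ Y ∈ derived n, B X Y = 0) → X = 0)
    (hGO : IsGO B) (a : n) : a ∈ skewSub B := by
  have P : ∀ k : ℕ, ∀ a : n,
      a ∈ skewSub B ⊔ (LieModule.lowerCentralSeries ℝ n n k).toSubmodule := by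
    intro k
    induction k with
    | zero =>
      intro a
      apply Submodule.mem_sup_right
      rw [LieModule.lowerCentralSeries_zero, LieSubmodule.top_toSubmodule]
      trivial
    | succ k ih =>
      intro a
      obtain ⟨z, hz, x, hxP, rfl⟩ := exists_decomp B hsymm hnondeg' a
      have hxK : x ∈ skewSub B := key4 B hsymm hnondeg hnondeg' hGO hxP
      have hVle : derived n ≤
          skewSub B ⊔ (LieModule.lowerCentralSeries ℝ n n (k+1)).toSubmodule := by
        apply Submodule.span_le.2
        rintro _ ⟨X, Y, rfl⟩
        obtain ⟨p, hp, q, hq, rfl⟩ := Submodule.mem_sup.1 (ih X)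
        obtain ⟨p', hp', q', hq', rfl⟩ := Submodule.mem_sup.1 (ih Y)
        have hmem : ∀ w : n, ∀ m ∈ LieModule.lowerCentralSeries ℝ n n k,
            ⁅w, m⁆ ∈ (LieModule.lowerCentralSeries ℝ n n (k+1)).toSubmodule := by
          intro w m hm
          rw [LieSubmodule.mem_toSubmodule _, LieModule.lowerCentralSeries_succ]
          exact LieSubmodule.lie_mem_lie (LieSubmodule.mem_top w) hm
        have hq'' : q ∈ LieModule.lowerCentralSeries ℝ n n k :=
          (LieSubmodule.mem_toSubmodule _).1 hq
        have hq''' : q' ∈ LieModule.lowerCentralSeries ℝ n n k :=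
          (LieSubmodule.mem_toSubmodule _).1 hq'
        have e : ⁅p + q, p' + q'⁆ = ⁅p, p'⁆ + (⁅p, q'⁆ + (-⁅p', q⁆ + ⁅q, q'⁆)) := by
          rw [add_lie, lie_add, lie_add, ← lie_skew p' q]
          abel
        rw [SetLike.mem_coe, e]
        refine Submodule.add_mem _ (Submodule.mem_sup_left (key5 B hsymm hp hp'))
          (Submodule.mem_sup_right ?_)
        refine Submodule.add_mem _ (hmem p q' hq''') ?_
        exact Submodule.add_mem _ (Submodule.neg_mem _ (hmem p' q hq'')) (hmem q q' hq''')
      exact Submodule.add_mem _ (hVle hz) (Submodule.mem_sup_left hxK)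
  obtain ⟨K₀, hK₀⟩ := LieModule.IsNilpotent.nilpotent ℝ n n
  have := P K₀ a
  rw [hK₀, LieSubmodule.bot_toSubmodule, sup_bot_eq] at this
  exact this

end Invariance
section Central

variable {n : Type*} [LieRing n] [LieAlgebra ℝ n]

/-- The span of brackets of elements of the derived algebra. -/
def derived2 (n : Type*) [LieRing n] [LieAlgebra ℝ n] : Submodule ℝ n :=
  Submodule.span ℝ {m : n | ∃ u ∈ derived n, ∃ v ∈ derived n, ⁅u, v⁆ = m}

lemma derived2_le_derived : derived2 n ≤ derived n := by
  apply Submodule.span_le.2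
  rintro _ ⟨u, hu, v, hv, rfl⟩
  exact bracket_mem_derived u v

lemma exists_central [LieRing.IsNilpotent n]
    {w₀ : n} (hw₀ : w₀ ∈ derived2 n) (hne : w₀ ≠ 0) :
    ∃ c : n, c ∈ derived2 n ∧ c ≠ 0 ∧ ∀ z ∈ derived n, ⁅z, c⁆ = 0 := by
  obtain ⟨K₀, hbot⟩ := LieModule.IsNilpotent.nilpotent ℝ n n
  have claim : ∀ j : ℕ, ∀ w : n, w ∈ derived2 n →
      w ∈ LieModule.lowerCentralSeries ℝ n n (K₀ - j) → w ≠ 0 →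
      ∃ c : n, c ∈ derived2 n ∧ c ≠ 0 ∧ ∀ z ∈ derived n, ⁅z, c⁆ = 0 := by
    intro j
    induction j with
    | zero =>
      intro w _ hlcs hwne
      exfalso
      apply hwne
      rw [Nat.sub_zero, hbot] at hlcs
      simpa using hlcs
    | succ j ih =>
      intro w hw2 hlcs hwne
      by_cases hcen : ∀ z ∈ derived n, ⁅z, w⁆ = 0
      · exact ⟨w, hw2, hwne, hcen⟩
      · push_neg at hcen
        obtain ⟨z, hz, hzne⟩ := hcen
        refine ih ⁅z, w⁆ ?_ ?_ hzne
        · exact Submodule.subset_span ⟨z, hz, w, derived2_le_derived hw2, rfl⟩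
        · have h1 : ⁅z, w⁆ ∈ LieModule.lowerCentralSeries ℝ n n ((K₀ - (j + 1)) + 1) := by
            rw [LieModule.lowerCentralSeries_succ]
            exact LieSubmodule.lie_mem_lie (LieSubmodule.mem_top z) hlcs
          have h2 : K₀ - j ≤ (K₀ - (j + 1)) + 1 := by omega
          exact LieModule.antitone_lowerCentralSeries ℝ n n h2 h1
  refine claim K₀ w₀ hw₀ ?_ hne
  rw [Nat.sub_self, LieModule.lowerCentralSeries_zero]
  trivial

variable (B : LinearMap.BilinForm ℝ n)

lemma central_null
    (hInv : ∀ a : n, a ∈ skewSub B)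
    {c : n} (hc2 : c ∈ derived2 n) (hcen : ∀ z ∈ derived n, ⁅z, c⁆ = 0) :
    B c c = 0 := by
  have hall : ∀ Y ∈ derived2 n, B Y c = 0 := by
    intro Y hY
    induction hY using Submodule.span_induction with
    | mem m hm =>
      obtain ⟨u, hu, v, hv, rfl⟩ := hm
      rw [hInv u v hv c (derived2_le_derived hc2), hcen u hu]
      simp
    | zero => simp
    | add a b _ _ ha hb => rw [map_add, LinearMap.add_apply, ha, hb, add_zero]
    | smul s a _ ha => rw [map_smul, LinearMap.smul_apply, ha, smul_zero]
  exact hall c hc2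

end Central
section Lorentz

variable {V : Type*} [AddCommGroup V] [Module ℝ V] (g : LinearMap.BilinForm ℝ V)
variable {m : ℕ} (b : Module.Basis (Fin (m + 1)) ℝ V) (i₀ : Fin (m + 1))

lemma lor_expand (horth : ∀ i j, i ≠ j → g (b i) (b j) = 0) (x y : V) :
    g x y = ∑ i, b.repr x i * b.repr y i * g (b i) (b i) := by
  conv_lhs => rw [← b.sum_repr x, ← b.sum_repr y]
  rw [LinearMap.BilinForm.sum_left]
  refine Finset.sum_congr rfl fun i _ => ?_
  rw [LinearMap.BilinForm.sum_right]
  rw [Finset.sum_eq_single i]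
  · simp only [map_smul, LinearMap.smul_apply, smul_eq_mul]; ring
  · intro j _ hj
    simp only [map_smul, LinearMap.smul_apply, smul_eq_mul]
    rw [horth i j (fun h => hj h.symm)]
    ring
  · intro h; exact absurd (Finset.mem_univ i) h

lemma lor_c_i0_ne (horth : ∀ i j, i ≠ j → g (b i) (b j) = 0)
    (hpos : ∀ i, i ≠ i₀ → 0 < g (b i) (b i)) (c : V) (hc : g c c = 0) (hc0 : c ≠ 0) : b.repr c i₀ ≠ 0 := by
  intro h0
  apply hc0
  have hexp := lor_expand g b horth c c
  rw [hc] at hexp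
  have hterms : ∀ i ∈ Finset.univ, (0:ℝ) ≤ b.repr c i * b.repr c i * g (b i) (b i) := by
    intro i _
    by_cases hi : i = i₀
    · subst hi; rw [h0]; simp
    · exact mul_nonneg (mul_self_nonneg _) (le_of_lt (hpos i hi))
  have hzero := (Finset.sum_eq_zero_iff_of_nonneg hterms).1 hexp.symm
  have hrepr : b.repr c = 0 := by
    ext i
    by_cases hi : i = i₀
    · subst hi; exact h0
    · have := hzero i (Finset.mem_univ i)
      rcases mul_eq_zero.1 this with h | h
      · rcases mul_eq_zero.1 h with h' | h' <;> simpa using h'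
      · exact absurd h (ne_of_gt (hpos i hi))
  simpa using b.repr.map_eq_zero_iff.1 hrepr

lemma lor_key (horth : ∀ i j, i ≠ j → g (b i) (b j) = 0)
    (hpos : ∀ i, i ≠ i₀ → 0 < g (b i) (b i)) (hsymm : ∀ x y : V, g x y = g y x)
    (c : V) (hc : g c c = 0) (hc0 : c ≠ 0)
    (u : V) (huc : g u c = 0) :
    0 ≤ g u u ∧ (g u u = 0 → ∃ μ : ℝ, u = μ • c) := by
  have hci₀ := lor_c_i0_ne g b i₀ horth hpos c hc hc0
  set lam := b.repr u i₀ / b.repr c i₀ with hlam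
  set v := u - lam • c with hv
  have hvi₀ : b.repr v i₀ = 0 := by
    rw [hv, map_sub, map_smul]
    simp only [Finsupp.sub_apply, Finsupp.smul_apply, smul_eq_mul]
    rw [hlam]
    field_simp
    ring
  have hvv : g v v = g u u := by
    rw [hv]
    simp only [map_sub, map_smul, LinearMap.sub_apply, LinearMap.smul_apply, smul_eq_mul]
    rw [hsymm c u, huc, hc]
    ring
  have hexp := lor_expand g b horth v v
  have hterms : ∀ i ∈ Finset.univ, (0:ℝ) ≤ b.repr v i * b.repr v i * g (b i) (b i) := by
    intro i _
    by_cases hi : i = i₀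
    · subst hi; rw [hvi₀]; simp
    · exact mul_nonneg (mul_self_nonneg _) (le_of_lt (hpos i hi))
  constructor
  · rw [← hvv, hexp]
    exact Finset.sum_nonneg hterms
  · intro huu
    have hvv0 : g v v = 0 := by rw [hvv, huu]
    rw [hexp] at hvv0
    have hzero := (Finset.sum_eq_zero_iff_of_nonneg hterms).1 hvv0
    have hrepr : b.repr v = 0 := by
      ext i
      by_cases hi : i = i₀
      · subst hi; exact hvi₀
      · have := hzero i (Finset.mem_univ i)
        rcases mul_eq_zero.1 this with h | h
        · rcases mul_eq_zero.1 h with h' | h' <;> simpa using h'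
        · exact absurd h (ne_of_gt (hpos i hi))
    have hv0 : v = 0 := by simpa using b.repr.map_eq_zero_iff.1 hrepr
    refine ⟨lam, ?_⟩
    rw [hv, sub_eq_zero] at hv0
    exact hv0

lemma lor_cs_null (horth : ∀ i j, i ≠ j → g (b i) (b j) = 0)
    (hpos : ∀ i, i ≠ i₀ → 0 < g (b i) (b i)) (hsymm : ∀ x y : V, g x y = g y x)
    (c : V) (hc : g c c = 0) (hc0 : c ≠ 0)
    (u w : V) (huc : g u c = 0) (hwc : g w c = 0) (hww : g w w = 0) :
    g u w = 0 := by
  by_contra hne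
  set t := -(g u u + 1) / (2 * g u w) with ht
  have htc : g (u + t • w) c = 0 := by
    rw [map_add, LinearMap.add_apply, map_smul, LinearMap.smul_apply, huc, hwc]
    simp
  have h1 := (lor_key g b i₀ horth hpos hsymm c hc hc0 (u + t • w) htc).1
  have hexp : g (u + t • w) (u + t • w) = g u u + 2 * t * g u w := by
    simp only [map_add, map_smul, LinearMap.add_apply, LinearMap.smul_apply, smul_eq_mul]
    rw [hsymm w u, hww]
    ring
  have ht2 : 2 * t * g u w = -(g u u + 1) := by
    rw [ht]
    field_simp
  rw [hexp, ht2] at h1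
  linarith

end Lorentz
section Key10

variable {n : Type*} [LieRing n] [LieAlgebra ℝ n] [LieRing.IsNilpotent n]
variable (B : LinearMap.BilinForm ℝ n)

lemma key10 (hInv : ∀ a : n, a ∈ skewSub B)
    {c : n} (hcV : c ∈ derived n)
    (hpsd : ∀ u : n, u ∈ derived n → B u c = 0 → B u u = 0 → ∃ μ : ℝ, u = μ • c)
    (hcs : ∀ u w : n, u ∈ derived n → w ∈ derived n → B u c = 0 → B w c = 0 →
      B w w = 0 → B u w = 0)
    (hcen : ∀ z ∈ derived n, ⁅z, c⁆ = 0)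
    {z u : n} (hz : z ∈ derived n) (hu : u ∈ derived n) (huc : B u c = 0) :
    ∃ μ : ℝ, ⁅z, u⁆ = μ • c := by
  obtain ⟨K₀, hbot⟩ := LieModule.IsNilpotent.nilpotent ℝ n n
  set f : ℕ → n := fun j => (fun w => ⁅z, w⁆)^[j] u with hf
  have hfsucc : ∀ j, f (j + 1) = ⁅z, f j⁆ := by
    intro j
    rw [hf]
    simp [Function.iterate_succ_apply']
  have hf0 : f 0 = u := rfl
  have hfV : ∀ j, f j ∈ derived n := by
    intro j
    cases j with
    | zero => exact hu
    | succ j => rw [hfsucc]; exact bracket_mem_derived z (f j)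
  have hfc : ∀ j, B (f j) c = 0 := by
    intro j
    induction j with
    | zero => exact huc
    | succ j _ =>
      rw [hfsucc, hInv z (f j) (hfV j) c hcV, hcen z hz]
      simp
  have hflcs : ∀ j, f j ∈ LieModule.lowerCentralSeries ℝ n n j := by
    intro j
    induction j with
    | zero => rw [LieModule.lowerCentralSeries_zero]; trivial
    | succ j ih =>
      rw [hfsucc, LieModule.lowerCentralSeries_succ]
      exact LieSubmodule.lie_mem_lie (LieSubmodule.mem_top z) ih
  have hK : f K₀ = 0 := by
    have := hflcs K₀
    rw [hbot] at this
    simpa using this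
  have hnull : ∀ d j : ℕ, j = K₀ - d → 1 ≤ j → B (f j) (f j) = 0 := by
    intro d
    induction d with
    | zero =>
      intro j hj _
      rw [Nat.sub_zero] at hj
      rw [hj, hK]
      simp
    | succ d ih =>
      intro j hj h1
      by_cases hd : K₀ ≤ d
      · omega
      · have hj1 : j + 1 = K₀ - d := by omega
        have hprev : B (f (j + 1)) (f (j + 1)) = 0 := ih (j + 1) hj1 (by omega)
        obtain ⟨j', rfl⟩ : ∃ j', j = j' + 1 := ⟨j - 1, by omega⟩
        have e1 := hInv z (f j') (hfV j') ⁅z, f j'⁆ (bracket_mem_derived z (f j'))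
        have e2 : B (f j') (f (j' + 1 + 1)) = 0 :=
          hcs (f j') (f (j' + 1 + 1)) (hfV _) (hfV _) (hfc _) (hfc _) hprev
        rw [hfsucc j', e1, ← hfsucc j', ← hfsucc (j' + 1), e2, neg_zero]
  by_cases hK0 : K₀ = 0
  · have hu0 : u = 0 := by
      have h2 : u ∈ LieModule.lowerCentralSeries ℝ n n K₀ := by
        rw [hK0, LieModule.lowerCentralSeries_zero]
        trivial
      rw [hbot] at h2
      simpa using h2
    exact ⟨0, by rw [hu0, lie_zero, zero_smul]⟩
  · have h1 : B (f 1) (f 1) = 0 := hnull (K₀ - 1) 1 (by omega) le_rfl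
    have hfu : f 1 = ⁅z, u⁆ := by rw [hfsucc 0, hf0]
    rw [hfu] at h1
    have hmc : B ⁅z, u⁆ c = 0 := by rw [← hfu]; exact hfc 1
    exact hpsd ⁅z, u⁆ (bracket_mem_derived z u) hmc h1

end Key10
/-- if the GO condition holds and the restriction of the form to the derived
algebra is nondegenerate and Lorentz, then the derived algebra is abelian. -/
theorem stmt11 {n : Type*} [LieRing n] [LieAlgebra ℝ n] [FiniteDimensional ℝ n]
    [LieRing.IsNilpotent n] (B : LinearMap.BilinForm ℝ n)
    (hsymm : ∀ X Y : n, B X Y = B Y X)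
    (hnondeg : ∀ X : n, (∀ Y : n, B X Y = 0) → X = 0)
    (hGO : IsGO B)
    (hnondeg' : ∀ X ∈ derived n, (∀ Y ∈ derived n, B X Y = 0) → X = 0)
    (hLorentz' : IsLorentz (B.restrict (derived n))) :
    ∀ a ∈ derived n, ∀ b ∈ derived n, ⁅a, b⁆ = 0 := by
  have hInv : ∀ x : n, x ∈ skewSub B := all_skew B hsymm hnondeg hnondeg' hGO
  by_cases htriv : ∀ a ∈ derived n, ∀ b ∈ derived n, ⁅a, b⁆ = 0
  · exact htriv
  push_neg at htriv
  obtain ⟨a₀, ha₀, b₀, hb₀, hne0⟩ := htriv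
  have hw₀ : ⁅a₀, b₀⁆ ∈ derived2 n := Submodule.subset_span ⟨a₀, ha₀, b₀, hb₀, rfl⟩
  obtain ⟨c, hc2, hc0, hcen⟩ := exists_central hw₀ hne0
  have hcV : c ∈ derived n := derived2_le_derived hc2
  have hcc : B c c = 0 := central_null B hInv hc2 hcen
  obtain ⟨m, bas, i₀, horth, hneg, hpos⟩ := hLorentz'
  have hgsymm : ∀ x y : ↥(derived n),
      (B.restrict (derived n)) x y = (B.restrict (derived n)) y x := fun x y => by
    simp only [LinearMap.BilinForm.restrict_apply]
    exact hsymm _ _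
  set chat : ↥(derived n) := ⟨c, hcV⟩ with hchat
  have hchat0 : chat ≠ 0 := by
    intro h
    apply hc0
    have := congrArg Subtype.val h
    exact this
  have hchatcc : (B.restrict (derived n)) chat chat = 0 := by
    simp only [LinearMap.BilinForm.restrict_apply]
    exact hcc
  have hpsd : ∀ u : n, u ∈ derived n → B u c = 0 → B u u = 0 → ∃ μ : ℝ, u = μ • c := by
    intro u hu huc huu
    have hres := (lor_key (B.restrict (derived n)) bas i₀ horth hpos hgsymm chat hchatcc
      hchat0 ⟨u, hu⟩ (by simp only [LinearMap.BilinForm.restrict_apply]; exact huc)).2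
      (by simp only [LinearMap.BilinForm.restrict_apply]; exact huu)
    obtain ⟨μ, hμ⟩ := hres
    refine ⟨μ, ?_⟩
    have := congrArg Subtype.val hμ
    simpa using this
  have hcs : ∀ u w : n, u ∈ derived n → w ∈ derived n → B u c = 0 → B w c = 0 →
      B w w = 0 → B u w = 0 := by
    intro u w hu hw huc hwc hww
    have hres := lor_cs_null (B.restrict (derived n)) bas i₀ horth hpos hgsymm chat hchatcc
      hchat0 ⟨u, hu⟩ ⟨w, hw⟩
      (by simp only [LinearMap.BilinForm.restrict_apply]; exact huc)
      (by simp only [LinearMap.BilinForm.restrict_apply]; exact hwc)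
      (by simp only [LinearMap.BilinForm.restrict_apply]; exact hww)
    simpa using hres
  have hv₁ : ∃ v₁ ∈ derived n, B c v₁ ≠ 0 := by
    by_contra h
    push_neg at h
    exact hc0 (hnondeg' c hcV h)
  obtain ⟨v₁, hv₁V, hs⟩ := hv₁
  have hRc : ∀ u v : n, u ∈ derived n → v ∈ derived n → ∃ μ : ℝ, ⁅u, v⁆ = μ • c := by
    intro u v hu hv
    set ru := B u c / B c v₁ with hru
    set rv := B v c / B c v₁ with hrv
    set u₀ := u - ru • v₁ with hu₀
    set v₀ := v - rv • v₁ with hv₀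
    have hu₀V : u₀ ∈ derived n :=
      Submodule.sub_mem _ hu (Submodule.smul_mem _ _ hv₁V)
    have hv₀V : v₀ ∈ derived n :=
      Submodule.sub_mem _ hv (Submodule.smul_mem _ _ hv₁V)
    have hu₀c : B u₀ c = 0 := by
      rw [hu₀, map_sub, map_smul, LinearMap.sub_apply, LinearMap.smul_apply, smul_eq_mul,
        hru, hsymm v₁ c]
      field_simp
      ring
    have hv₀c : B v₀ c = 0 := by
      rw [hv₀, map_sub, map_smul, LinearMap.sub_apply, LinearMap.smul_apply, smul_eq_mul,
        hrv, hsymm v₁ c]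
      field_simp
      ring
    obtain ⟨μ₁, hμ₁⟩ := key10 B hInv hcV hpsd hcs hcen hu₀V hv₀V hv₀c
    obtain ⟨μ₂, hμ₂⟩ := key10 B hInv hcV hpsd hcs hcen hv₁V hu₀V hu₀c
    obtain ⟨μ₃, hμ₃⟩ := key10 B hInv hcV hpsd hcs hcen hv₁V hv₀V hv₀c
    refine ⟨μ₁ - rv * μ₂ + ru * μ₃, ?_⟩
    have h1 : u = u₀ + ru • v₁ := by rw [hu₀]; abel
    have h2 : v = v₀ + rv • v₁ := by rw [hv₀]; abel
    have e : ⁅u, v⁆ = ⁅u₀, v₀⁆ + rv • ⁅u₀, v₁⁆ + ru • ⁅v₁, v₀⁆ + (ru * rv) • ⁅v₁, v₁⁆ := by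
      conv_lhs => rw [h1, h2]
      rw [add_lie, lie_add, lie_add, smul_lie, smul_lie, lie_smul, lie_smul, smul_smul]
      abel
    have e2 : ⁅u₀, v₁⁆ = -(μ₂ • c) := by rw [← lie_skew, hμ₂]
    rw [e, hμ₁, e2, lie_self, hμ₃]
    module
  have hbv₁ : ∀ u ∈ derived n, ⁅u, v₁⁆ = 0 := by
    intro u hu
    obtain ⟨μ, hμ⟩ := hRc u v₁ hu hv₁V
    have h1 : B ⁅u, v₁⁆ v₁ = - B v₁ ⁅u, v₁⁆ := hInv u v₁ hv₁V v₁ hv₁V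
    rw [hμ, map_smul, LinearMap.smul_apply, map_smul, smul_eq_mul, smul_eq_mul,
      hsymm v₁ c] at h1
    have hμ0 : μ = 0 := by
      have h2 : μ * B c v₁ = 0 := by linarith
      rcases mul_eq_zero.1 h2 with h | h
      · exact h
      · exact absurd h hs
    rw [hμ, hμ0, zero_smul]
  intro a ha b hb
  obtain ⟨μ, hμ⟩ := hRc a b ha hb
  have h1 : B ⁅a, b⁆ v₁ = - B b ⁅a, v₁⁆ := hInv a b hb v₁ hv₁V
  rw [hbv₁ a ha, map_zero, neg_zero, hμ, map_smul, LinearMap.smul_apply, smul_eq_mul] at h1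
  rcases mul_eq_zero.1 h1 with h | h
  · rw [hμ, h, zero_smul]
  · exact absurd h hs
end

section
/- Let d > 1 and s ≥ 1 be integers and S a real s×s matrix with S^d = 0 and S^{d-1} ≠ 0. Let Q be the 2s×2s block matrix Q = [[0, Sᵀ],[S, Sᵀ - S]]. Then Q is nilpotent and Q^{d-1} ≠ 0. (Indeed Q = M R M^{-1} where M = [[I, I],[0, I]] and R = [[-S, 0],[S, Sᵀ]].) -/
/-!
Conjugating by the block shear `M = [[I, I], [0, I]]` turns `Q = [[0, Sᵀ], [S, Sᵀ - S]]` into the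
block lower-triangular matrix `R = [[-S, 0], [S, Sᵀ]]`. Powers of `R` keep the shape
`[[(-S)ⁿ, 0], [*, (Sᵀ)ⁿ]]`, so `R` is nilpotent since both diagonal blocks are, and `R ^ (d - 1) ≠ 0`
because its upper left block is `±S ^ (d - 1)`. Conjugation preserves both properties.
-/

open Matrix

lemma Units.conj_pow_eq_zero_iff {M₀ : Type*} [MonoidWithZero M₀] (u : M₀ˣ) (x : M₀) (k : ℕ) :
    ((u : M₀) * x * ↑u⁻¹) ^ k = 0 ↔ x ^ k = 0 := by
  rw [Units.conj_pow, Units.mul_left_eq_zero, Units.mul_right_eq_zero]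

lemma Units.isNilpotent_conj_iff {M₀ : Type*} [MonoidWithZero M₀] (u : M₀ˣ) (x : M₀) :
    IsNilpotent ((u : M₀) * x * ↑u⁻¹) ↔ IsNilpotent x := by
  simp only [IsNilpotent, Units.conj_pow_eq_zero_iff]

lemma neg_pow_eq_zero_iff {R : Type*} [Ring R] (x : R) (k : ℕ) : (-x) ^ k = 0 ↔ x ^ k = 0 := by
  rw [neg_pow, ((isUnit_neg_one).pow k).mul_right_eq_zero]

namespace Matrix

variable {m n α : Type*} [Fintype m] [Fintype n] [DecidableEq m] [DecidableEq n]

lemma fromBlocks_zero₁₂_pow [Semiring α] (A : Matrix m m α) (C : Matrix n m α)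
    (D : Matrix n n α) (k : ℕ) :
    ∃ X, fromBlocks A 0 C D ^ k = fromBlocks (A ^ k) 0 X (D ^ k) := by
  induction k with
  | zero => exact ⟨0, by simp [fromBlocks_one]⟩
  | succ k ih =>
    obtain ⟨X, hX⟩ := ih
    exact ⟨X * A + D ^ k * C, by rw [pow_succ, hX, fromBlocks_multiply]; simp [pow_succ]⟩

lemma toBlocks₁₁_fromBlocks_zero₁₂_pow [Semiring α] (A : Matrix m m α) (C : Matrix n m α)
    (D : Matrix n n α) (k : ℕ) : (fromBlocks A 0 C D ^ k).toBlocks₁₁ = A ^ k := by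
  obtain ⟨X, hX⟩ := fromBlocks_zero₁₂_pow A C D k
  rw [hX, toBlocks_fromBlocks₁₁]

lemma isNilpotent_fromBlocks_zero₁₂ [Semiring α] {A : Matrix m m α} {D : Matrix n n α}
    (hA : IsNilpotent A) (hD : IsNilpotent D) (C : Matrix n m α) :
    IsNilpotent (fromBlocks A 0 C D) := by
  obtain ⟨a, ha⟩ := hA
  obtain ⟨b, hb⟩ := hD
  obtain ⟨X, hX⟩ := fromBlocks_zero₁₂_pow A C D a
  obtain ⟨Y, hY⟩ := fromBlocks_zero₁₂_pow A C D b
  -- `[[Aᵇ, 0], [Y, 0]] * [[0, 0], [X, Dᵃ]] = 0`: the zero blocks of the two factors interlock.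
  refine ⟨b + a, ?_⟩
  rw [pow_add, hX, hY, ha, hb, fromBlocks_multiply]
  simp

variable (n α) in
def blockShear [Ring α] : (Matrix (n ⊕ n) (n ⊕ n) α)ˣ where
  val := fromBlocks 1 1 0 1
  inv := fromBlocks 1 (-1) 0 1
  val_inv := by rw [fromBlocks_multiply, ← fromBlocks_one]; simp
  inv_val := by rw [fromBlocks_multiply, ← fromBlocks_one]; simp

lemma fromBlocks_zero_sub_eq_conj [Ring α] (S T : Matrix n n α) :
    fromBlocks 0 T S (T - S) =
      (blockShear n α : Matrix (n ⊕ n) (n ⊕ n) α) * fromBlocks (-S) 0 S T *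
        ((blockShear n α)⁻¹ : (Matrix (n ⊕ n) (n ⊕ n) α)ˣ) := by
  simp only [blockShear, Units.inv_mk, fromBlocks_multiply]
  congr 1 <;> simp [sub_eq_neg_add]

end Matrix

theorem stmt14_general (d s : ℕ)
    (S : Matrix (Fin s) (Fin s) ℝ) (hSd : S ^ d = 0) (hSd1 : S ^ (d - 1) ≠ 0) :
    IsNilpotent (Matrix.fromBlocks 0 Sᵀ S (Sᵀ - S)) ∧
    (Matrix.fromBlocks 0 Sᵀ S (Sᵀ - S)) ^ (d - 1) ≠ 0 := by
  rw [fromBlocks_zero_sub_eq_conj, Units.isNilpotent_conj_iff, Ne,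
    Units.conj_pow_eq_zero_iff]
  have hS : IsNilpotent S := ⟨d, hSd⟩
  refine ⟨isNilpotent_fromBlocks_zero₁₂ hS.neg (isNilpotent_transpose_iff.mpr hS) S, ?_⟩
  intro hR
  apply hSd1
  rw [← neg_pow_eq_zero_iff, ← toBlocks₁₁_fromBlocks_zero₁₂_pow (-S) S Sᵀ, hR]
  rfl

/-- the block matrix `Q = [[0, Sᵀ],[S, Sᵀ - S]]` built from a `d`-step nilpotent
matrix `S` is nilpotent with `Q^{d-1} ≠ 0`. -/
theorem stmt14 (d s : ℕ) (hd : 1 < d) (hs : 1 ≤ s)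
    (S : Matrix (Fin s) (Fin s) ℝ) (hSd : S ^ d = 0) (hSd1 : S ^ (d - 1) ≠ 0) :
    IsNilpotent (Matrix.fromBlocks 0 Sᵀ S (Sᵀ - S)) ∧
    (Matrix.fromBlocks 0 Sᵀ S (Sᵀ - S)) ^ (d - 1) ≠ 0 :=
  stmt14_general d s S hSd hSd1
end

section
/- Let d > 1 and s ≥ 1 be integers and S a real s×s matrix with S^d = 0 and S^{d-1} ≠ 0. Let P = [[0, -Sᵀ],[S, Sᵀ - S]] and Q = [[0, Sᵀ],[S, Sᵀ - S]] (2s×2s block matrices), and let ⟨·,·⟩₀ be the Euclidean inner product on ℝ^{2s}. On 𝔫 = ℝf ⊕ ℝ^{2s} ⊕ ℝe define [αf + X + ηe, βf + Y + ρe] = αQY − βQX + ⟨PX,Y⟩₀ e. Then this bracket is bilinear, antisymmetric and satisfies the Jacobi identity, making 𝔫 a nilpotent Lie algebra whose lower central series satisfies 𝔫^d ≠ 0 (where 𝔫¹ = 𝔫, 𝔫^{i+1} = [𝔫, 𝔫^i]), so 𝔫 is nilpotent of step at least d. Moreover the symmetric bilinear form ⟨αf + X + ηe, βf + Y + ρe⟩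 = ⟨X,Y⟩₀ + αρ + βη is nondegenerate of Lorentz signature on 𝔫. -/
open Matrix

/-- The block matrix `P = [[0, -Sᵀ],[S, Sᵀ - S]]`. -/
def Pmat {s : ℕ} (S : Matrix (Fin s) (Fin s) ℝ) :
    Matrix (Fin s ⊕ Fin s) (Fin s ⊕ Fin s) ℝ :=
  Matrix.fromBlocks 0 (-Sᵀ) S (Sᵀ - S)

/-- The block matrix `Q = [[0, Sᵀ],[S, Sᵀ - S]]`. -/
def Qmat {s : ℕ} (S : Matrix (Fin s) (Fin s) ℝ) :
    Matrix (Fin s ⊕ Fin s) (Fin s ⊕ Fin s) ℝ :=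
  Matrix.fromBlocks 0 Sᵀ S (Sᵀ - S)

/-- The underlying vector space `𝔫 = ℝf ⊕ ℝ^{2s} ⊕ ℝe`; the element `(α, X, η)` represents
`αf + X + ηe`. -/
abbrev DE (s : ℕ) : Type := ℝ × ((Fin s ⊕ Fin s) → ℝ) × ℝ

/-- The Lie bracket `[αf + X + ηe, βf + Y + ρe] = αQY − βQX + ⟨PX, Y⟩₀ e` of the double
extension construction. -/
def bkDE {s : ℕ} (S : Matrix (Fin s) (Fin s) ℝ) (a b : DE s) : DE s :=
  (0, a.1 • (Qmat S).mulVec b.2.1 - b.1 • (Qmat S).mulVec a.2.1,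
    (Pmat S).mulVec a.2.1 ⬝ᵥ b.2.1)

/-- The inner product `⟨αf + X + ηe, βf + Y + ρe⟩ = ⟨X,Y⟩₀ + αρ + βη` of the double extension
construction. -/
def formDE {s : ℕ} (a b : DE s) : ℝ :=
  a.2.1 ⬝ᵥ b.2.1 + a.1 * b.2.2 + b.1 * a.2.2

/-- `D` is a skew-symmetric derivation of the double extension `(𝔫, ⟨·,·⟩)`: a linear map that
is a derivation of the bracket and skew-symmetric with respect to the form. -/
def IsSkewDerivDE {s : ℕ} (S : Matrix (Fin s) (Fin s) ℝ) (D : DE s → DE s) : Prop :=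
  IsLinearMap ℝ D ∧
  (∀ a b : DE s, D (bkDE S a b) = bkDE S (D a) b + bkDE S a (D b)) ∧
  (∀ a b : DE s, formDE (D a) b + formDE a (D b) = 0)

/-- The lower central series of the double extension: `lcsDE S 0 = 𝔫¹ = 𝔫` and
`lcsDE S i = 𝔫^{i+1} = [𝔫, 𝔫^i]` (as spans). -/
def lcsDE {s : ℕ} (S : Matrix (Fin s) (Fin s) ℝ) : ℕ → Submodule ℝ (DE s)
  | 0 => ⊤
  | i + 1 => Submodule.span ℝ {z : DE s | ∃ a : DE s, ∃ b ∈ lcsDE S i, bkDE S a b = z}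

/-- A symmetric bilinear form (given as a plain function) is Lorentz: there is an orthogonal
basis in which exactly one basis vector has negative norm-square and all others have positive
norm-square. -/
def LorentzFun {V : Type*} [AddCommGroup V] [Module ℝ V] (Φ : V → V → ℝ) : Prop :=
  ∃ (m : ℕ) (b : Module.Basis (Fin (m + 1)) ℝ V) (i₀ : Fin (m + 1)),
    (∀ i j, i ≠ j → Φ (b i) (b j) = 0) ∧ Φ (b i₀) (b i₀) < 0 ∧
    ∀ i, i ≠ i₀ → 0 < Φ (b i) (b i)


section Aux

open Matrix

/-- Auxiliary matrix `T = [[1,0],[1,1]]`. -/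
def TmatAux (s : ℕ) : Matrix (Fin s ⊕ Fin s) (Fin s ⊕ Fin s) ℝ := Matrix.fromBlocks 1 0 1 1

/-- Auxiliary matrix `T' = [[1,0],[-1,1]]`. -/
def TmatAux' (s : ℕ) : Matrix (Fin s ⊕ Fin s) (Fin s ⊕ Fin s) ℝ := Matrix.fromBlocks 1 0 (-1) 1

/-- Auxiliary matrix `M = [[Sᵀ,Sᵀ],[0,-S]]`. -/
def MmatAux {s : ℕ} (S : Matrix (Fin s) (Fin s) ℝ) :
    Matrix (Fin s ⊕ Fin s) (Fin s ⊕ Fin s) ℝ := Matrix.fromBlocks Sᵀ Sᵀ 0 (-S)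

lemma hTT' (s : ℕ) : TmatAux s * TmatAux' s = 1 := by
  simp [TmatAux, TmatAux', Matrix.fromBlocks_multiply, ← Matrix.fromBlocks_one]

lemma hT'T (s : ℕ) : TmatAux' s * TmatAux s = 1 := by
  simp [TmatAux, TmatAux', Matrix.fromBlocks_multiply, ← Matrix.fromBlocks_one]

lemma hQfact {s : ℕ} (S : Matrix (Fin s) (Fin s) ℝ) :
    Qmat S = TmatAux s * MmatAux S * TmatAux' s := by
  simp [TmatAux, TmatAux', MmatAux, Qmat, Matrix.fromBlocks_multiply]
  exact sub_eq_add_neg _ _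

lemma hQpow {s : ℕ} (S : Matrix (Fin s) (Fin s) ℝ) (k : ℕ) :
    (Qmat S) ^ k = TmatAux s * (MmatAux S) ^ k * TmatAux' s := by
  induction k with
  | zero => simp [hTT']
  | succ n ih =>
      rw [pow_succ, pow_succ, ih, hQfact]
      rw [show TmatAux s * MmatAux S ^ n * TmatAux' s * (TmatAux s * MmatAux S * TmatAux' s)
          = TmatAux s * MmatAux S ^ n * (TmatAux' s * TmatAux s) * MmatAux S * TmatAux' s by
            noncomm_ring]
      rw [hT'T]; noncomm_ring

lemma hMpow {s : ℕ} (S : Matrix (Fin s) (Fin s) ℝ) (k : ℕ) :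
    ∃ C, (MmatAux S) ^ k = Matrix.fromBlocks (Sᵀ ^ k) C 0 ((-S) ^ k) := by
  induction k with
  | zero => exact ⟨0, by simp [← Matrix.fromBlocks_one]⟩
  | succ n ih =>
      obtain ⟨C, hC⟩ := ih
      refine ⟨Sᵀ ^ n * Sᵀ + C * (-S), ?_⟩
      rw [pow_succ, hC, MmatAux, Matrix.fromBlocks_multiply]
      simp [pow_succ]

lemma Pskew {s : ℕ} (S : Matrix (Fin s) (Fin s) ℝ) : (Pmat S)ᵀ = -(Pmat S) := by
  unfold Pmat
  simp [Matrix.fromBlocks_transpose]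
  ext i j; cases i <;> cases j <;> simp [Matrix.fromBlocks]

lemma hQtP {s : ℕ} (S : Matrix (Fin s) (Fin s) ℝ) :
    (Qmat S)ᵀ * Pmat S = -(Pmat S * Qmat S) := by
  unfold Pmat Qmat
  simp [Matrix.fromBlocks_transpose, Matrix.fromBlocks_multiply]
  rw [show -Matrix.fromBlocks (-(Sᵀ * S)) (-(Sᵀ * (Sᵀ - S))) ((Sᵀ - S) * S)
        (S * Sᵀ + (Sᵀ - S) * (Sᵀ - S))
      = Matrix.fromBlocks (Sᵀ * S) (Sᵀ * (Sᵀ - S)) (-((Sᵀ - S) * S))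
        (-(S * Sᵀ + (Sᵀ - S) * (Sᵀ - S))) by simp [Matrix.fromBlocks_neg]]
  rw [Matrix.fromBlocks_inj]
  refine ⟨rfl, rfl, by noncomm_ring, by noncomm_ring⟩

lemma hPtQ {s : ℕ} (S : Matrix (Fin s) (Fin s) ℝ) :
    (Pmat S)ᵀ * Qmat S = (Qmat S)ᵀ * Pmat S := by
  rw [Pskew, hQtP, Matrix.neg_mul]

lemma mulVec_dot {n : Type*} [Fintype n] (M : Matrix n n ℝ) (u v : n → ℝ) :
    (M.mulVec u) ⬝ᵥ v = u ⬝ᵥ (Mᵀ.mulVec v) := by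
  rw [dotProduct_comm, Matrix.dotProduct_mulVec, dotProduct_comm,
    Matrix.mulVec_transpose]

lemma hdot1 {s : ℕ} (S : Matrix (Fin s) (Fin s) ℝ) (X Y : (Fin s ⊕ Fin s) → ℝ) :
    (Pmat S).mulVec X ⬝ᵥ Y = -((Pmat S).mulVec Y ⬝ᵥ X) := by
  rw [mulVec_dot, Pskew, Matrix.neg_mulVec, dotProduct_neg, dotProduct_comm]

lemma hdot2 {s : ℕ} (S : Matrix (Fin s) (Fin s) ℝ) (X Y : (Fin s ⊕ Fin s) → ℝ) :
    (Pmat S).mulVec X ⬝ᵥ (Qmat S).mulVec Y = (Pmat S).mulVec Y ⬝ᵥ (Qmat S).mulVec X := by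
  rw [mulVec_dot, Matrix.mulVec_mulVec, hPtQ, ← Matrix.mulVec_mulVec, ← mulVec_dot,
    dotProduct_comm]

/-- `L (α, X, η) = (α + η, X, α - η)`. -/
noncomputable def Lmap (s : ℕ) : DE s ≃ₗ[ℝ] DE s where
  toFun a := (a.1 + a.2.2, a.2.1, a.1 - a.2.2)
  invFun a := ((a.1 + a.2.2) / 2, a.2.1, (a.1 - a.2.2) / 2)
  map_add' a b := by refine Prod.ext_iff.mpr ⟨?_, Prod.ext_iff.mpr ⟨?_, ?_⟩⟩ <;> simp <;> try ring
  map_smul' r a := by refine Prod.ext_iff.mpr ⟨?_, Prod.ext_iff.mpr ⟨?_, ?_⟩⟩ <;> simp <;> try ring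
  left_inv a := by refine Prod.ext_iff.mpr ⟨?_, Prod.ext_iff.mpr ⟨?_, ?_⟩⟩ <;> simp <;> try ring
  right_inv a := by refine Prod.ext_iff.mpr ⟨?_, Prod.ext_iff.mpr ⟨?_, ?_⟩⟩ <;> simp <;> try ring

/-- The submodule `{0} × range (Q^k) × ℝ`. -/
def Wsub {s : ℕ} (S : Matrix (Fin s) (Fin s) ℝ) (k : ℕ) : Submodule ℝ (DE s) :=
  Submodule.prod ⊥ ((LinearMap.range (Matrix.mulVecLin ((Qmat S) ^ k))).prod ⊤)

lemma lcs_le {s : ℕ} (S : Matrix (Fin s) (Fin s) ℝ) (k : ℕ) :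
    lcsDE S (k + 1) ≤ Wsub S (k + 1) := by
  induction k with
  | zero =>
      rw [show (0 : ℕ) + 1 = 1 from rfl, lcsDE]
      apply Submodule.span_le.mpr
      rintro z ⟨a, b, -, rfl⟩
      refine Submodule.mem_prod.mpr ⟨by simp [bkDE], Submodule.mem_prod.mpr ⟨?_, trivial⟩⟩
      refine ⟨a.1 • b.2.1 - b.1 • a.2.1, ?_⟩
      simp [bkDE, Matrix.mulVecLin_apply, Matrix.mulVec_smul, sub_eq_add_neg,
        Matrix.mulVec_add, Matrix.mulVec_neg]
  | succ n ih =>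
      rw [lcsDE]
      apply Submodule.span_le.mpr
      rintro z ⟨a, b, hb, rfl⟩
      obtain ⟨hb1, hb2, -⟩ := Submodule.mem_prod.mp (ih hb)
      rw [Submodule.mem_bot] at hb1
      obtain ⟨u, hu⟩ := hb2
      refine Submodule.mem_prod.mpr ⟨by simp [bkDE], Submodule.mem_prod.mpr ⟨?_, trivial⟩⟩
      refine ⟨a.1 • u, ?_⟩
      simp only [bkDE, hb1, zero_smul, sub_zero, Matrix.mulVecLin_apply]
      rw [← hu]
      simp [Matrix.mulVec_smul, Matrix.mulVec_mulVec, ← pow_succ']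

end Aux

/-- the bracket of the double extension construction is bilinear, antisymmetric
and satisfies the Jacobi identity; the resulting Lie algebra is nilpotent of step at least `d`;
and the form of the construction is a nondegenerate symmetric bilinear form of Lorentz
signature. -/
theorem stmt15 (d s : ℕ) (hd : 1 < d) (hs : 1 ≤ s)
    (S : Matrix (Fin s) (Fin s) ℝ) (hSd : S ^ d = 0) (hSd1 : S ^ (d - 1) ≠ 0) :
    (∀ a b c : DE s, bkDE S (a + b) c = bkDE S a c + bkDE S b c) ∧
    (∀ (r : ℝ) (a b : DE s), bkDE S (r • a) b = r • bkDE S a b) ∧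
    (∀ a b c : DE s, bkDE S a (b + c) = bkDE S a b + bkDE S a c) ∧
    (∀ (r : ℝ) (a b : DE s), bkDE S a (r • b) = r • bkDE S a b) ∧
    (∀ a b : DE s, bkDE S a b = - bkDE S b a) ∧
    (∀ a b c : DE s,
      bkDE S a (bkDE S b c) + bkDE S b (bkDE S c a) + bkDE S c (bkDE S a b) = 0) ∧
    (∃ m : ℕ, lcsDE S m = ⊥) ∧
    lcsDE S (d - 1) ≠ ⊥ ∧
    (∀ a b : DE s, formDE a b = formDE b a) ∧
    (∀ a : DE s, (∀ b : DE s, formDE a b = 0) → a = 0) ∧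
    LorentzFun (formDE (s := s)) := by
  have hbadd : ∀ a b c : DE s, bkDE S (a + b) c = bkDE S a c + bkDE S b c := by
    intro a b c
    simp only [bkDE, Prod.ext_iff, Prod.fst_add, Prod.snd_add, Matrix.mulVec_add,
      Matrix.add_mulVec, add_dotProduct, dotProduct_add]
    refine ⟨by ring, by module, trivial⟩
  have hbsmul : ∀ (r : ℝ) (a b : DE s), bkDE S (r • a) b = r • bkDE S a b := by
    intro r a b
    simp only [bkDE, Prod.ext_iff, Prod.smul_fst, Prod.smul_snd, Matrix.mulVec_smul,
      smul_dotProduct, dotProduct_smul, smul_eq_mul]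
    refine ⟨by simp, by module, trivial⟩
  have hbadd2 : ∀ a b c : DE s, bkDE S a (b + c) = bkDE S a b + bkDE S a c := by
    intro a b c
    simp only [bkDE, Prod.ext_iff, Prod.fst_add, Prod.snd_add, Matrix.mulVec_add,
      Matrix.add_mulVec, add_dotProduct, dotProduct_add]
    refine ⟨by ring, by module, trivial⟩
  have hbsmul2 : ∀ (r : ℝ) (a b : DE s), bkDE S a (r • b) = r • bkDE S a b := by
    intro r a b
    simp only [bkDE, Prod.ext_iff, Prod.smul_fst, Prod.smul_snd, Matrix.mulVec_smul,
      smul_dotProduct, dotProduct_smul, smul_eq_mul]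
    refine ⟨by simp, by module, trivial⟩
  have hanti : ∀ a b : DE s, bkDE S a b = - bkDE S b a := by
    intro a b
    simp only [bkDE, Prod.ext_iff, Prod.fst_neg, Prod.snd_neg]
    refine ⟨by simp, by module, ?_⟩
    rw [hdot1 S a.2.1 b.2.1]
  have hjacobi : ∀ a b c : DE s,
      bkDE S a (bkDE S b c) + bkDE S b (bkDE S c a) + bkDE S c (bkDE S a b) = 0 := by
    intro a b c
    refine Prod.ext_iff.mpr ⟨by simp [bkDE], Prod.ext_iff.mpr ⟨?_, ?_⟩⟩
    · simp only [bkDE, Prod.fst_add, Prod.snd_add, Prod.fst_zero, Prod.snd_zero,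
        Matrix.mulVec_sub, Matrix.mulVec_smul, zero_smul, sub_zero]
      module
    · simp only [bkDE, Prod.fst_add, Prod.snd_add, Prod.fst_zero, Prod.snd_zero,
        dotProduct_sub, dotProduct_smul, smul_eq_mul,
        Matrix.mulVec_zero, zero_dotProduct, dotProduct_zero]
      rw [hdot2 S a.2.1 c.2.1, hdot2 S a.2.1 b.2.1, hdot2 S b.2.1 c.2.1]
      ring
  have hQ2d : (Qmat S) ^ (2 * d) = 0 := by
    obtain ⟨C, hC⟩ := hMpow S d
    have hSTd : (Sᵀ : Matrix (Fin s) (Fin s) ℝ) ^ d = 0 := by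
      rw [← Matrix.transpose_pow, hSd, Matrix.transpose_zero]
    have hnegd : (-S) ^ d = 0 := by rw [neg_pow]; simp [hSd]
    have hMd : (MmatAux S) ^ d = Matrix.fromBlocks 0 C 0 0 := by rw [hC, hSTd, hnegd]
    have hM2d : (MmatAux S) ^ (2 * d) = 0 := by
      rw [two_mul, pow_add, hMd, Matrix.fromBlocks_multiply]
      simp
    rw [hQpow, hM2d]
    simp
  have hQd1 : (Qmat S) ^ (d - 1) ≠ 0 := by
    intro h0
    have hM0 : (MmatAux S) ^ (d - 1) = 0 := by
      have h1 : TmatAux' s * ((Qmat S) ^ (d - 1)) * TmatAux s = (MmatAux S) ^ (d - 1) := by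
        rw [hQpow]
        rw [show TmatAux' s * (TmatAux s * MmatAux S ^ (d - 1) * TmatAux' s) * TmatAux s
            = (TmatAux' s * TmatAux s) * MmatAux S ^ (d - 1) * (TmatAux' s * TmatAux s) by
              noncomm_ring]
        rw [hT'T]; simp
      rw [← h1, h0]; simp
    obtain ⟨C, hC⟩ := hMpow S (d - 1)
    rw [hM0] at hC
    have hST : (Sᵀ : Matrix (Fin s) (Fin s) ℝ) ^ (d - 1) = 0 := by
      ext i j
      have h2 := congrFun (congrFun hC.symm (Sum.inl i)) (Sum.inl j)
      simpa [Matrix.fromBlocks] using h2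
    apply hSd1
    have h3 : (S ^ (d - 1))ᵀ = 0 := by rw [Matrix.transpose_pow]; exact hST
    calc S ^ (d - 1) = ((S ^ (d - 1))ᵀ)ᵀ := by rw [Matrix.transpose_transpose]
      _ = 0 := by rw [h3]; simp
  refine ⟨hbadd, hbsmul, hbadd2, hbsmul2, hanti, hjacobi, ?_, ?_, ?_, ?_, ?_⟩
  · -- nilpotency
    refine ⟨2 * d + 1, ?_⟩
    have e : 2 * d - 1 + 1 = 2 * d := by omega
    have hW := lcs_le S (2 * d - 1)
    rw [e] at hW
    rw [show 2 * d + 1 = (2 * d) + 1 from rfl, lcsDE]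
    rw [← le_bot_iff]
    apply Submodule.span_le.mpr
    rintro z ⟨a, b, hb, rfl⟩
    obtain ⟨hb1, hb2, -⟩ := Submodule.mem_prod.mp (hW hb)
    rw [Submodule.mem_bot] at hb1
    rw [hQ2d] at hb2
    obtain ⟨u, hu⟩ := hb2
    rw [Matrix.mulVecLin_apply, Matrix.zero_mulVec] at hu
    have : bkDE S a b = 0 := by
      simp [bkDE, hb1, ← hu, Prod.ext_iff]
    simp [this]
  · -- lcs (d-1) ≠ ⊥
    obtain ⟨i, j, hij⟩ : ∃ i j, ((Qmat S) ^ (d - 1)) i j ≠ 0 := by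
      by_contra h
      push_neg at h
      exact hQd1 (Matrix.ext fun i j => h i j)
    have hz : ∀ k, ((0 : ℝ), ((Qmat S) ^ k).mulVec (Pi.single j 1), (0 : ℝ)) ∈ lcsDE S k := by
      intro k
      induction k with
      | zero => exact Submodule.mem_top
      | succ n ih =>
          rw [lcsDE]
          apply Submodule.subset_span
          refine ⟨((1 : ℝ), 0, 0), _, ih, ?_⟩
          simp only [bkDE]
          refine Prod.ext_iff.mpr ⟨rfl, Prod.ext_iff.mpr ⟨?_, by simp⟩⟩
          rw [one_smul, zero_smul, sub_zero, Matrix.mulVec_mulVec, ← pow_succ']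
    intro hbot
    have h0 := hbot ▸ hz (d - 1)
    rw [Submodule.mem_bot] at h0
    have h1 := congrFun (congrArg (fun p : DE s => p.2.1) h0) i
    apply hij
    simpa using h1
  · -- symmetry
    intro a b
    simp only [formDE, dotProduct_comm a.2.1 b.2.1]
    ring
  · -- nondegeneracy
    intro a ha
    have h1 := ha ((0 : ℝ), 0, 1)
    have h2 := ha ((1 : ℝ), 0, 0)
    have h3 : ∀ i, a.2.1 i = 0 := by
      intro i
      have := ha ((0 : ℝ), Pi.single i 1, 0)
      simpa [formDE, dotProduct_single] using this
    simp only [formDE, dotProduct_zero, dotProduct_comm] at h1 h2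
    refine Prod.ext_iff.mpr ⟨?_, Prod.ext_iff.mpr ⟨funext h3, ?_⟩⟩
    · simpa using h1
    · simpa using h2
  · -- Lorentz
    have hcard : Fintype.card (Unit ⊕ ((Fin s ⊕ Fin s) ⊕ Unit)) = (2 * s + 1) + 1 := by
      simp; omega
    let eqv : (Unit ⊕ ((Fin s ⊕ Fin s) ⊕ Unit)) ≃ Fin ((2 * s + 1) + 1) :=
      Fintype.equivFinOfCardEq hcard
    let B0 : Module.Basis (Unit ⊕ ((Fin s ⊕ Fin s) ⊕ Unit)) ℝ (DE s) :=
      (Module.Basis.singleton Unit ℝ).prod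
        ((Pi.basisFun ℝ (Fin s ⊕ Fin s)).prod (Module.Basis.singleton Unit ℝ))
    let Bb : Module.Basis (Fin ((2 * s + 1) + 1)) ℝ (DE s) := (B0.map (Lmap s)).reindex eqv
    have hval : ∀ p, Bb (eqv p) = Lmap s (B0 p) := by
      intro p
      simp [Bb, Module.Basis.reindex_apply, Module.Basis.map_apply]
    have hB1 : Lmap s (B0 (Sum.inl ())) = ((1 : ℝ), 0, 1) := by
      have : B0 (Sum.inl ()) = ((1 : ℝ), 0, 0) := by
        simp [B0, Module.Basis.prod_apply, Module.Basis.singleton_apply]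
        rfl
      rw [this]
      simp [Lmap]
    have hB2 : ∀ j, Lmap s (B0 (Sum.inr (Sum.inl j))) = ((0 : ℝ), Pi.single j 1, 0) := by
      intro j
      have : B0 (Sum.inr (Sum.inl j)) = ((0 : ℝ), Pi.single j 1, 0) := by
        simp [B0, Module.Basis.prod_apply, Pi.basisFun_apply]
      rw [this]
      simp [Lmap]
    have hB3 : Lmap s (B0 (Sum.inr (Sum.inr ()))) = ((1 : ℝ), 0, -1) := by
      have : B0 (Sum.inr (Sum.inr ())) = ((0 : ℝ), 0, 1) := by
        simp [B0, Module.Basis.prod_apply, Module.Basis.singleton_apply]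
      rw [this]
      simp [Lmap]
    refine ⟨2 * s + 1, Bb, eqv (Sum.inr (Sum.inr ())), ?_, ?_, ?_⟩
    · intro i j hij
      rw [show i = eqv (eqv.symm i) from (eqv.apply_symm_apply i).symm,
        show j = eqv (eqv.symm j) from (eqv.apply_symm_apply j).symm, hval, hval]
      have hpq : eqv.symm i ≠ eqv.symm j := fun h => hij (by
        rw [show i = eqv (eqv.symm i) from (eqv.apply_symm_apply i).symm, h,
          eqv.apply_symm_apply])
      rcases hp : eqv.symm i with ⟨⟩ | (p | ⟨⟩) <;> rcases hq : eqv.symm j with ⟨⟩ | (q | ⟨⟩) <;>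
        rw [hp, hq] at hpq
      · exact absurd rfl hpq
      · rw [hB1, hB2]
        simp [formDE]
      · rw [hB1, hB3]
        simp [formDE]
      · rw [hB2, hB1]
        simp [formDE]
      · have hne : p ≠ q := fun h => hpq (by rw [h])
        rw [hB2, hB2]
        simp [formDE, single_dotProduct, Pi.single_eq_of_ne (Ne.symm hne)]
      · rw [hB2, hB3]
        simp [formDE]
      · rw [hB3, hB1]
        simp [formDE]
      · rw [hB3, hB2]
        simp [formDE]
      · exact absurd rfl hpq
    · rw [hval, hB3]
      norm_num [formDE]
    · intro i hi
      rw [show i = eqv (eqv.symm i) from (eqv.apply_symm_apply i).symm, hval]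
      have hp : eqv.symm i ≠ Sum.inr (Sum.inr ()) := fun h => hi (by
        rw [show i = eqv (eqv.symm i) from (eqv.apply_symm_apply i).symm, h])
      rcases hq : eqv.symm i with ⟨⟩ | (p | ⟨⟩)
      · rw [hB1]
        norm_num [formDE]
      · rw [hB2]
        norm_num [formDE, single_dotProduct]
      · rw [hq] at hp
        exact absurd rfl hp
end

section
/- In the double extension construction, with A_T defined by A_T(βf + Y + ρe) = β v(T) − ⟨v(T), Y⟩₀ e for T = αf + X + ηe and v(T) = (Qᵀ + P)X, one has ⟨[T, T'] + A_T(T'), T⟩ = 0 for all T, T' ∈ 𝔫. Consequently (𝔫, ⟨·,·⟩) satisfies the GO condition with k = 0 and with a geodesic graph T ↦ A_T that is linear in T. -/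
open Matrix

/-- `v(T) = (Qᵀ + P) X` for `T = αf + X + ηe`. -/
def vDE {s : ℕ} (S : Matrix (Fin s) (Fin s) ℝ) (T : DE s) : (Fin s ⊕ Fin s) → ℝ :=
  ((Qmat S)ᵀ + Pmat S).mulVec T.2.1

/-- The geodesic graph of the double extension construction:
`A_T (βf + Y + ρe) = β v(T) − ⟨v(T), Y⟩₀ e`. -/
def ATDE {s : ℕ} (S : Matrix (Fin s) (Fin s) ℝ) (T : DE s) : DE s → DE s :=
  fun b => (0, b.1 • vDE S T, -(vDE S T ⬝ᵥ b.2.1))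

/-!
Write `M = Qᵀ + P`, so that `v(T) = M X`. The matrix `P` is skew-symmetric, and
`M = [[0, 0], [2S, 0]]` squares to zero. Expanding `⟨[T,T'] + A_T T', T⟩` gives
`α (⟨X, QY⟩₀ + ⟨PX, Y⟩₀ - ⟨v, Y⟩₀) + β (⟨X, v⟩₀ - ⟨X, QX⟩₀)`, and both brackets vanish
because `⟨v, Y⟩₀ = ⟨X, QY⟩₀ + ⟨PX, Y⟩₀` and `⟨X, PX⟩₀ = 0`. The map `A_T` is skew-symmetric
by its shape, and it is a derivation because `M v = 0`, i.e. `P v = -Qᵀ v`.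
-/

section SkewSymmetric

variable {m n R : Type*} [Fintype m] [Fintype n]

theorem Matrix.transpose_mulVec_dotProduct [CommSemiring R] (A : Matrix m n R) (x : m → R)
    (y : n → R) : Aᵀ *ᵥ x ⬝ᵥ y = x ⬝ᵥ A *ᵥ y := by
  rw [mulVec_transpose, dotProduct_mulVec]

theorem Matrix.mulVec_dotProduct_of_transpose_eq_neg [CommRing R] {A : Matrix n n R}
    (hA : Aᵀ = -A) (x y : n → R) : A *ᵥ x ⬝ᵥ y = -(A *ᵥ y ⬝ᵥ x) := by
  rw [dotProduct_comm, ← transpose_mulVec_dotProduct, hA, neg_mulVec, neg_dotProduct]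

theorem Matrix.mulVec_dotProduct_self_of_transpose_eq_neg [CommRing R] [NoZeroDivisors R]
    [CharZero R] {A : Matrix n n R} (hA : Aᵀ = -A) (x : n → R) : A *ᵥ x ⬝ᵥ x = 0 :=
  self_eq_neg.mp (mulVec_dotProduct_of_transpose_eq_neg hA x x)

end SkewSymmetric

section DoubleExtension

variable {s : ℕ} (S : Matrix (Fin s) (Fin s) ℝ)

theorem Pmat_transpose : (Pmat S)ᵀ = -Pmat S := by
  simp [Pmat, fromBlocks_transpose, fromBlocks_neg]

theorem Qmat_transpose_add_Pmat : (Qmat S)ᵀ + Pmat S = fromBlocks 0 0 (S + S) 0 := by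
  simp [Pmat, Qmat, fromBlocks_transpose, fromBlocks_add]

theorem Qmat_transpose_add_Pmat_mul_self :
    ((Qmat S)ᵀ + Pmat S) * ((Qmat S)ᵀ + Pmat S) = 0 := by
  simp [Qmat_transpose_add_Pmat, fromBlocks_multiply]

theorem Pmat_mulVec_vDE (T : DE s) : Pmat S *ᵥ vDE S T = -((Qmat S)ᵀ *ᵥ vDE S T) := by
  have h : ((Qmat S)ᵀ + Pmat S) *ᵥ vDE S T = 0 := by
    rw [vDE, mulVec_mulVec, Qmat_transpose_add_Pmat_mul_self, zero_mulVec]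
  rw [add_mulVec] at h
  exact eq_neg_of_add_eq_zero_right h

theorem formDE_bkDE_add_ATDE_self (T T' : DE s) :
    formDE (bkDE S T T' + ATDE S T T') T = 0 := by
  obtain ⟨α, X, η⟩ := T
  obtain ⟨β, Y, ρ⟩ := T'
  have hQY : (Qmat S)ᵀ *ᵥ X ⬝ᵥ Y = X ⬝ᵥ Qmat S *ᵥ Y := transpose_mulVec_dotProduct _ _ _
  have hQX : (Qmat S)ᵀ *ᵥ X ⬝ᵥ X = Qmat S *ᵥ X ⬝ᵥ X := by
    rw [transpose_mulVec_dotProduct, dotProduct_comm]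
  have hPX : Pmat S *ᵥ X ⬝ᵥ X = 0 :=
    mulVec_dotProduct_self_of_transpose_eq_neg (Pmat_transpose S) X
  have hYX : Qmat S *ᵥ Y ⬝ᵥ X = X ⬝ᵥ Qmat S *ᵥ Y := dotProduct_comm _ _
  simp only [formDE, bkDE, ATDE, vDE, Prod.fst_add, Prod.snd_add, add_mulVec, add_dotProduct,
    sub_dotProduct, smul_dotProduct, smul_eq_mul]
  linear_combination α * hYX - α * hQY + β * hQX + β * hPX

theorem isLinearMap_vDE : IsLinearMap ℝ (vDE S) where
  map_add T T' := by simp [vDE, mulVec_add]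
  map_smul c T := by simp [vDE, mulVec_smul]

theorem isLinearMap_ATDE : IsLinearMap ℝ (fun T : DE s => ATDE S T) where
  map_add T T' := by
    funext b
    simp only [ATDE, Pi.add_apply, (isLinearMap_vDE S).map_add, smul_add, add_dotProduct,
      Prod.mk_add_mk, add_zero, neg_add]
  map_smul c T := by
    funext b
    simp [ATDE, (isLinearMap_vDE S).map_smul, smul_comm b.1 c]

theorem isLinearMap_ATDE_apply (T : DE s) : IsLinearMap ℝ (ATDE S T) where
  map_add a b := by
    simp only [ATDE, Prod.fst_add, add_smul, Prod.snd_add, dotProduct_add, Prod.mk_add_mk,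
      add_zero, neg_add]
  map_smul c a := by simp [ATDE, smul_smul]

theorem formDE_ATDE_add_formDE_ATDE (T a b : DE s) :
    formDE (ATDE S T a) b + formDE a (ATDE S T b) = 0 := by
  simp [formDE, ATDE, smul_dotProduct, dotProduct_smul, dotProduct_comm (vDE S T) a.2.1]

theorem ATDE_bkDE (T a b : DE s) :
    ATDE S T (bkDE S a b) = bkDE S (ATDE S T a) b + bkDE S a (ATDE S T b) := by
  have hQ : ∀ x, vDE S T ⬝ᵥ Qmat S *ᵥ x = -(Pmat S *ᵥ vDE S T ⬝ᵥ x) := fun x => by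
    rw [Pmat_mulVec_vDE, ← transpose_mulVec_dotProduct, neg_dotProduct, neg_neg]
  have hP : ∀ x, Pmat S *ᵥ x ⬝ᵥ vDE S T = -(Pmat S *ᵥ vDE S T ⬝ᵥ x) := fun x =>
    mulVec_dotProduct_of_transpose_eq_neg (Pmat_transpose S) x (vDE S T)
  simp only [ATDE, bkDE, Prod.ext_iff, Prod.mk_add_mk]
  refine ⟨by simp, ?_, ?_⟩
  · funext i
    simp only [Pi.add_apply, Pi.sub_apply, Pi.smul_apply, smul_eq_mul, mulVec_smul, zero_smul]
    ring
  · simp only [dotProduct_sub, dotProduct_smul, smul_dotProduct, hQ, hP, mulVec_smul,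
      smul_eq_mul]
    ring

theorem isSkewDerivDE_ATDE (T : DE s) : IsSkewDerivDE S (ATDE S T) :=
  ⟨isLinearMap_ATDE_apply S T, ATDE_bkDE S T, formDE_ATDE_add_formDE_ATDE S T⟩

end DoubleExtension

theorem stmt17_general (s : ℕ)
    (S : Matrix (Fin s) (Fin s) ℝ) :
    (∀ T T' : DE s, formDE (bkDE S T T' + ATDE S T T') T = 0) ∧
    IsLinearMap ℝ (fun T : DE s => ATDE S T) ∧
    (∀ T : DE s, ∃ A : DE s → DE s, IsSkewDerivDE S A ∧
      ∀ T' : DE s, formDE (bkDE S T T' + A T') T = 0) :=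
  ⟨formDE_bkDE_add_ATDE_self S, isLinearMap_ATDE S,
    fun T => ⟨ATDE S T, isSkewDerivDE_ATDE S T, formDE_bkDE_add_ATDE_self S T⟩⟩

/-- `⟨[T,T'] + A_T(T'), T⟩ = 0` for all `T, T'`, and `T ↦ A_T` is linear; hence
the double extension satisfies the GO condition with `k = 0` via a linear geodesic graph. -/
theorem stmt17 (d s : ℕ) (hd : 1 < d) (hs : 1 ≤ s)
    (S : Matrix (Fin s) (Fin s) ℝ) (hSd : S ^ d = 0) (hSd1 : S ^ (d - 1) ≠ 0) :
    (∀ T T' : DE s, formDE (bkDE S T T' + ATDE S T T') T = 0) ∧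
    IsLinearMap ℝ (fun T : DE s => ATDE S T) ∧
    (∀ T : DE s, ∃ A : DE s → DE s, IsSkewDerivDE S A ∧
      ∀ T' : DE s, formDE (bkDE S T T' + A T') T = 0) :=
  stmt17_general s S
end

section
/- In the double extension construction, the geodesic graph T ↦ A_T (where A_T(βf + Y + ρe) = β v(T) − ⟨v(T), Y⟩₀ e and v(T) = (Qᵀ + P)X for T = αf + X + ηe) is equivariant under skew-symmetric derivations: for every skew-symmetric derivation B of (𝔫, ⟨·,·⟩) and every T ∈ 𝔫, A_{B(T)} = B ∘ A_T − A_T ∘ B. -/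
open Matrix

lemma key1_s18 {s : ℕ} (S : Matrix (Fin s) (Fin s) ℝ) :
    (Qmat S)ᵀ + Pmat S = Matrix.fromBlocks 0 0 ((2:ℝ) • S) 0 := by
  simp only [Qmat, Pmat, Matrix.fromBlocks_transpose, Matrix.fromBlocks_add,
    Matrix.transpose_transpose, Matrix.transpose_zero, Matrix.transpose_sub]
  rw [show Sᵀ + -Sᵀ = (0 : Matrix (Fin s) (Fin s) ℝ) by abel,
    show S + S = (2:ℝ) • S by module,
    show S - Sᵀ + (Sᵀ - S) = (0 : Matrix (Fin s) (Fin s) ℝ) by abel,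
    show (0 : Matrix (Fin s) (Fin s) ℝ) + 0 = 0 by abel]

lemma key2_s18 {s : ℕ} (S : Matrix (Fin s) (Fin s) ℝ) :
    (Pmat S)ᵀ = Matrix.fromBlocks 0 ((2:ℝ) • Sᵀ) 0 0 - Qmat S := by
  have h := congrArg Matrix.transpose (key1_s18 S)
  rw [Matrix.transpose_add, Matrix.transpose_transpose, Matrix.fromBlocks_transpose] at h
  rw [eq_sub_iff_add_eq, add_comm, h]
  simp [Matrix.transpose_smul]

lemma dot_ext {n : Type*} [Fintype n] [DecidableEq n] {v w : n → ℝ}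
    (h : ∀ Y, v ⬝ᵥ Y = w ⬝ᵥ Y) : v = w := by
  funext j
  have := h (Pi.single j 1)
  simpa [dotProduct_single] using this

/-- the geodesic graph `T ↦ A_T` of the double extension construction is
equivariant under skew-symmetric derivations: `A_{B(T)} = B ∘ A_T − A_T ∘ B`. -/
theorem stmt18 (d s : ℕ) (hd : 1 < d) (hs : 1 ≤ s)
    (S : Matrix (Fin s) (Fin s) ℝ) (hSd : S ^ d = 0) (hSd1 : S ^ (d - 1) ≠ 0) :
    ∀ B : DE s → DE s, IsSkewDerivDE S B →
      ∀ T x : DE s, ATDE S (B T) x = B (ATDE S T x) - ATDE S T (B x) := by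
  rintro B ⟨hlin, hder, hskew⟩
  have hS0 : S ≠ 0 := by
    intro h
    apply hSd1
    rw [h, zero_pow]
    omega
  -- notation
  set fE : DE s := ((1:ℝ), (0 : (Fin s ⊕ Fin s) → ℝ), (0:ℝ)) with hfE
  set eE : DE s := ((0:ℝ), (0 : (Fin s ⊕ Fin s) → ℝ), (1:ℝ)) with heE
  have fE1 : fE.1 = 1 := rfl
  have fE2 : fE.2.1 = 0 := rfl
  have fE3 : fE.2.2 = 0 := rfl
  have eE1 : eE.1 = 0 := rfl
  have eE2 : eE.2.1 = 0 := rfl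
  have eE3 : eE.2.2 = 1 := rfl
  set a : ℝ := (B fE).1 with ha
  set u : (Fin s ⊕ Fin s) → ℝ := (B fE).2.1 with hu
  set u' : (Fin s ⊕ Fin s) → ℝ := (B eE).2.1 with hu'
  set ψ : ((Fin s ⊕ Fin s) → ℝ) → ((Fin s ⊕ Fin s) → ℝ) :=
    fun X => (B ((0:ℝ), X, (0:ℝ))).2.1 with hψ
  set M : Matrix (Fin s ⊕ Fin s) (Fin s ⊕ Fin s) ℝ := (Qmat S)ᵀ + Pmat S with hM
  have hψdef : ∀ X, (B ((0:ℝ), X, (0:ℝ))).2.1 = ψ X := fun X => rfl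
  -- transpose-dot helper
  have hQt : ∀ (w Y : (Fin s ⊕ Fin s) → ℝ),
      (Qmat S)ᵀ.mulVec w ⬝ᵥ Y = w ⬝ᵥ (Qmat S).mulVec Y := by
    intro w Y
    rw [Matrix.mulVec_transpose, ← Matrix.dotProduct_mulVec]
  -- skew-symmetry facts
  have h_e1 : (B eE).1 = 0 := by
    have h := hskew eE eE
    simp only [formDE, eE1, eE2, eE3, dotProduct_zero, zero_dotProduct,
      mul_zero, zero_mul, mul_one, one_mul, add_zero, zero_add] at h
    linarith
  have h_e3 : (B eE).2.2 = -a := by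
    have h := hskew fE eE
    simp only [formDE, fE1, fE2, fE3, eE1, eE2, eE3, dotProduct_zero, zero_dotProduct,
      mul_zero, zero_mul, mul_one, one_mul, add_zero, zero_add, ← ha] at h
    linarith
  have h_f3 : (B fE).2.2 = 0 := by
    have h := hskew fE fE
    simp only [formDE, fE1, fE2, fE3, dotProduct_zero, zero_dotProduct,
      mul_zero, zero_mul, mul_one, one_mul, add_zero, zero_add] at h
    linarith
  have h_X1 : ∀ X, (B ((0:ℝ), X, (0:ℝ))).1 = -(X ⬝ᵥ u') := by
    intro X
    have h := hskew ((0:ℝ), X, (0:ℝ)) eE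
    simp only [formDE, eE1, eE2, eE3, dotProduct_zero, zero_dotProduct,
      mul_zero, zero_mul, mul_one, one_mul, add_zero, zero_add, ← hu'] at h
    linarith
  have h_X3 : ∀ X, (B ((0:ℝ), X, (0:ℝ))).2.2 = -(X ⬝ᵥ u) := by
    intro X
    have h := hskew ((0:ℝ), X, (0:ℝ)) fE
    simp only [formDE, fE1, fE2, fE3, dotProduct_zero, zero_dotProduct,
      mul_zero, zero_mul, mul_one, one_mul, add_zero, zero_add, ← hu] at h
    linarith
  have hskewψ : ∀ X Y : (Fin s ⊕ Fin s) → ℝ, ψ X ⬝ᵥ Y + X ⬝ᵥ ψ Y = 0 := by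
    intro X Y
    have h := hskew ((0:ℝ), X, (0:ℝ)) ((0:ℝ), Y, (0:ℝ))
    simp only [formDE, mul_zero, zero_mul, add_zero, zero_add, hψdef] at h
    exact h
  -- linearity facts
  have hψadd : ∀ w1 w2, ψ (w1 + w2) = ψ w1 + ψ w2 := by
    intro w1 w2
    have h : ((0:ℝ), w1 + w2, (0:ℝ)) = ((0:ℝ), w1, (0:ℝ)) + ((0:ℝ), w2, (0:ℝ)) := by
      simp [Prod.ext_iff]
    rw [hψ]
    simp only [h, hlin.map_add]
    rfl
  have hψsmul : ∀ (c : ℝ) w, ψ (c • w) = c • ψ w := by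
    intro c w
    have h : ((0:ℝ), c • w, (0:ℝ)) = c • ((0:ℝ), w, (0:ℝ)) := by
      simp [Prod.ext_iff]
    rw [hψ]
    simp only [h, hlin.map_smul]
    rfl
  have hdecomp : ∀ x : DE s, B x = x.1 • B fE + B ((0:ℝ), x.2.1, (0:ℝ)) + x.2.2 • B eE := by
    intro x
    have h : x = x.1 • fE + ((0:ℝ), x.2.1, (0:ℝ)) + x.2.2 • eE := by
      simp [Prod.ext_iff, hfE, heE]
    conv_lhs => rw [h]
    rw [hlin.map_add, hlin.map_add, hlin.map_smul, hlin.map_smul]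
  -- derivation facts
  have hQu' : (Qmat S).mulVec u' = 0 := by
    have h := hder fE eE
    have h0 : bkDE S fE eE = 0 := by
      simp [bkDE, fE1, fE2, eE1, eE2, Prod.ext_iff]
    rw [h0, hlin.map_zero] at h
    have h2 := congrArg (fun z : DE s => z.2.1) h.symm
    simp only [bkDE, Prod.fst_add, Prod.snd_add, eE1, eE2, fE1, fE2, Matrix.mulVec_zero, smul_zero, zero_smul,
      sub_zero, one_smul, add_zero, zero_add, ← hu'] at h2
    exact h2
  have hPu' : (Pmat S).mulVec u' = 0 := by
    apply dot_ext
    intro Y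
    have h := hder eE ((0:ℝ), Y, (0:ℝ))
    have h0 : bkDE S eE ((0:ℝ), Y, (0:ℝ)) = 0 := by
      simp [bkDE, eE1, eE2, Prod.ext_iff]
    rw [h0, hlin.map_zero] at h
    have h2 := congrArg (fun z : DE s => z.2.2) h.symm
    simp only [bkDE, Prod.fst_add, Prod.snd_add, eE1, eE2, Matrix.mulVec_zero, zero_dotProduct, add_zero, zero_add,
      ← hu'] at h2
    rw [zero_dotProduct]
    exact h2
  have hiv : ∀ Y, ψ ((Qmat S).mulVec Y) = a • (Qmat S).mulVec Y + (Qmat S).mulVec (ψ Y) := by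
    intro Y
    have h := hder fE ((0:ℝ), Y, (0:ℝ))
    have h0 : bkDE S fE ((0:ℝ), Y, (0:ℝ)) = ((0:ℝ), (Qmat S).mulVec Y, (0:ℝ)) := by
      simp [bkDE, fE1, fE2, Prod.ext_iff]
    rw [h0] at h
    have h2 := congrArg (fun z : DE s => z.2.1) h
    simp only [bkDE, Prod.fst_add, Prod.snd_add, fE1, fE2, Matrix.mulVec_zero, smul_zero, zero_smul, sub_zero,
      one_smul, add_zero, zero_add, hψdef, ← ha] at h2
    exact h2
  have hv : ∀ Y, -((Qmat S).mulVec Y ⬝ᵥ u) = (Pmat S).mulVec u ⬝ᵥ Y := by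
    intro Y
    have h := hder fE ((0:ℝ), Y, (0:ℝ))
    have h0 : bkDE S fE ((0:ℝ), Y, (0:ℝ)) = ((0:ℝ), (Qmat S).mulVec Y, (0:ℝ)) := by
      simp [bkDE, fE1, fE2, Prod.ext_iff]
    rw [h0] at h
    have h2 := congrArg (fun z : DE s => z.2.2) h
    simp only [bkDE, Prod.fst_add, Prod.snd_add, fE1, fE2, Matrix.mulVec_zero, zero_dotProduct, add_zero, zero_add,
      ← hu] at h2
    rw [← h_X3 ((Qmat S).mulVec Y)]
    exact h2
  have hi : ∀ X Y, ((Pmat S).mulVec X ⬝ᵥ Y) • u'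
      = (-(X ⬝ᵥ u')) • (Qmat S).mulVec Y - (-(Y ⬝ᵥ u')) • (Qmat S).mulVec X := by
    intro X Y
    have h := hder ((0:ℝ), X, (0:ℝ)) ((0:ℝ), Y, (0:ℝ))
    have h0 : bkDE S ((0:ℝ), X, (0:ℝ)) ((0:ℝ), Y, (0:ℝ))
        = ((Pmat S).mulVec X ⬝ᵥ Y) • eE := by
      simp [bkDE, heE, Prod.ext_iff]
    rw [h0, hlin.map_smul] at h
    have h2 := congrArg (fun z : DE s => z.2.1) h
    simp only [bkDE, Prod.fst_add, Prod.snd_add, Prod.smul_snd, Prod.smul_fst, zero_smul, smul_zero, sub_zero, zero_sub, add_zero, zero_add,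
      ← hu', h_X1, Matrix.mulVec_zero] at h2
    simpa [sub_eq_add_neg] using h2
  have hii : ∀ X Y, ((Pmat S).mulVec X ⬝ᵥ Y) * (-a)
      = (Pmat S).mulVec (ψ X) ⬝ᵥ Y + (Pmat S).mulVec X ⬝ᵥ ψ Y := by
    intro X Y
    have h := hder ((0:ℝ), X, (0:ℝ)) ((0:ℝ), Y, (0:ℝ))
    have h0 : bkDE S ((0:ℝ), X, (0:ℝ)) ((0:ℝ), Y, (0:ℝ))
        = ((Pmat S).mulVec X ⬝ᵥ Y) • eE := by
      simp [bkDE, heE, Prod.ext_iff]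
    rw [h0, hlin.map_smul] at h
    have h2 := congrArg (fun z : DE s => z.2.2) h
    simp only [bkDE, Prod.fst_add, Prod.snd_add, Prod.smul_snd, hψdef, smul_eq_mul, h_e3] at h2
    exact h2
  -- u' = 0
  have hPtu' : (Pmat S)ᵀ.mulVec u' = 0 := by
    rw [key2_s18, Matrix.sub_mulVec, hQu', sub_zero]
    have h2 : Sᵀ.mulVec (u' ∘ Sum.inr) = 0 := by
      have h3 : Sum.elim ((0 : Matrix (Fin s) (Fin s) ℝ).mulVec (u' ∘ Sum.inl)
          + Sᵀ.mulVec (u' ∘ Sum.inr))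
          (S.mulVec (u' ∘ Sum.inl) + (Sᵀ - S).mulVec (u' ∘ Sum.inr)) = 0 := by
        rw [← Matrix.fromBlocks_mulVec]
        exact hQu'
      funext i
      have := congrFun h3 (Sum.inl i)
      simpa using this
    rw [Matrix.fromBlocks_mulVec]
    funext i
    cases i <;> simp [Matrix.smul_mulVec, h2]
  have hu'0 : u' = 0 := by
    have hSij : ∃ i j, S i j ≠ 0 := by
      by_contra h
      push_neg at h
      exact hS0 (by ext i j; exact h i j)
    obtain ⟨i, j, hij⟩ := hSij
    have hkey : ∀ X, (u' ⬝ᵥ u') • (Qmat S).mulVec X = 0 := by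
      intro X
      have h := hi X u'
      have hPXu' : (Pmat S).mulVec X ⬝ᵥ u' = 0 := by
        rw [dotProduct_comm, Matrix.dotProduct_mulVec, ← Matrix.mulVec_transpose, hPtu',
          zero_dotProduct]
      rw [hPXu', hQu'] at h
      simpa [neg_smul, neg_neg] using h.symm
    have h := congrFun (hkey (Pi.single (Sum.inl j) 1)) (Sum.inr i)
    have hQval : (Qmat S).mulVec (Pi.single (Sum.inl j) 1) (Sum.inr i) = S i j := by
      rw [Matrix.mulVec_single]
      simp [Qmat]
    rw [Pi.smul_apply, hQval, smul_eq_mul] at h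
    rcases mul_eq_zero.mp h with h' | h'
    · exact dotProduct_self_eq_zero.mp h'
    · exact absurd h' hij
  -- psi commutation facts
  have hψP : ∀ X, (Pmat S).mulVec (ψ X)
      = ψ ((Pmat S).mulVec X) - a • (Pmat S).mulVec X := by
    intro X
    apply dot_ext
    intro Y
    have h1 := hii X Y
    have h2 := hskewψ ((Pmat S).mulVec X) Y
    rw [sub_dotProduct, smul_dotProduct, smul_eq_mul]
    linarith
  have hψQt : ∀ X, (Qmat S)ᵀ.mulVec (ψ X)
      = ψ ((Qmat S)ᵀ.mulVec X) - a • (Qmat S)ᵀ.mulVec X := by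
    intro X
    apply dot_ext
    intro Y
    have step1 : (Qmat S)ᵀ.mulVec (ψ X) ⬝ᵥ Y = ψ X ⬝ᵥ (Qmat S).mulVec Y := hQt _ _
    have step2 := hskewψ X ((Qmat S).mulVec Y)
    have step3 : X ⬝ᵥ ψ ((Qmat S).mulVec Y)
        = a * (X ⬝ᵥ (Qmat S).mulVec Y) + X ⬝ᵥ (Qmat S).mulVec (ψ Y) := by
      rw [hiv Y, dotProduct_add, dotProduct_smul, smul_eq_mul]
    have step4 : X ⬝ᵥ (Qmat S).mulVec Y = (Qmat S)ᵀ.mulVec X ⬝ᵥ Y := (hQt X Y).symm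
    have step5 : X ⬝ᵥ (Qmat S).mulVec (ψ Y) = (Qmat S)ᵀ.mulVec X ⬝ᵥ ψ Y := (hQt X (ψ Y)).symm
    have step6 := hskewψ ((Qmat S)ᵀ.mulVec X) Y
    rw [sub_dotProduct, smul_dotProduct, smul_eq_mul, step1]
    have ha4 : a * (X ⬝ᵥ (Qmat S).mulVec Y) = a * ((Qmat S)ᵀ.mulVec X ⬝ᵥ Y) := by rw [step4]
    linarith
  have hψM : ∀ X, M.mulVec (ψ X) = ψ (M.mulVec X) - a • M.mulVec X := by
    intro X
    rw [hM, Matrix.add_mulVec, Matrix.add_mulVec, hψP, hψQt, hψadd, smul_add]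
    abel
  -- Mu = 0
  have hMu : M.mulVec u = 0 := by
    apply dot_ext
    intro Y
    rw [hM, Matrix.add_mulVec, add_dotProduct, zero_dotProduct, hQt, ← hv Y,
      dotProduct_comm]
    ring
  -- components of B x
  have hBx1 : ∀ x : DE s, (B x).1 = x.1 * a := by
    intro x
    have h := congrArg (fun z : DE s => z.1) (hdecomp x)
    simp only [Prod.fst_add, Prod.smul_fst, smul_eq_mul, h_X1, h_e1, hu'0, ← ha,
      dotProduct_zero, neg_zero, mul_zero, add_zero] at h
    exact h
  have hBx21 : ∀ x : DE s, (B x).2.1 = x.1 • u + ψ x.2.1 := by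
    intro x
    have h := congrArg (fun z : DE s => z.2.1) (hdecomp x)
    simp only [Prod.snd_add, Prod.fst_add, Prod.smul_snd, Prod.smul_fst, hψdef, ← hu,
      ← hu', hu'0, smul_zero, add_zero] at h
    exact h
  have hBx22 : ∀ x : DE s, (B x).2.2 = -(x.2.1 ⬝ᵥ u) - x.2.2 * a := by
    intro x
    have h := congrArg (fun z : DE s => z.2.2) (hdecomp x)
    simp only [Prod.snd_add, Prod.smul_snd, smul_eq_mul, h_X3, h_e3, h_f3, ← hu,
      mul_zero, zero_add, add_zero, mul_neg] at h
    rw [h]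
    ring
  -- final computation
  intro T x
  have hvBT : vDE S (B T) = ψ (vDE S T) - a • vDE S T := by
    show M.mulVec ((B T).2.1) = _
    rw [hBx21 T, Matrix.mulVec_add, Matrix.mulVec_smul, hMu, smul_zero, zero_add, hψM]
    rfl
  simp only [ATDE]
  rw [hvBT]
  have hBAT : B ((0:ℝ), x.1 • vDE S T, -(vDE S T ⬝ᵥ x.2.1))
      = ((0:ℝ) * a, (0:ℝ) • u + ψ (x.1 • vDE S T),
        -((x.1 • vDE S T) ⬝ᵥ u) - (-(vDE S T ⬝ᵥ x.2.1)) * a) := by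
    refine Prod.ext (hBx1 _) (Prod.ext (hBx21 _) (hBx22 _))
  rw [hBAT, hBx1 x, hBx21 x, Prod.mk_sub_mk, Prod.mk_sub_mk]
  refine Prod.ext (by ring) (Prod.ext ?_ ?_)
  · show x.1 • (ψ (vDE S T) - a • vDE S T)
      = (0:ℝ) • u + ψ (x.1 • vDE S T) - (x.1 * a) • vDE S T
    rw [hψsmul]
    module
  · show -((ψ (vDE S T) - a • vDE S T) ⬝ᵥ x.2.1)
      = -((x.1 • vDE S T) ⬝ᵥ u) - (-(vDE S T ⬝ᵥ x.2.1)) * a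
        - -(vDE S T ⬝ᵥ (x.1 • u + ψ x.2.1))
    have h1 := hskewψ (vDE S T) x.2.1
    have h2 : vDE S T ⬝ᵥ u = u ⬝ᵥ vDE S T := dotProduct_comm _ _
    simp only [sub_dotProduct, smul_dotProduct, dotProduct_add, dotProduct_smul,
      smul_eq_mul] at *
    linarith
end
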